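/- arXiv:1411.0522 — 5 statements merged into one kernel-verified Lean document; each statement's English description precedes it below -/
import Mathlib

section
/- For every positive integer k, the graph P_k obtained from a path with k edges by adding k−1 parallel copies of each edge is k-edge-connected but contains no strong immersion of K_3. -/
open scoped Classical

/-- A multigraph: possibly parallel edges and loops, given by source/target maps
(the orientation is irrelevant; walks may traverse edges in either direction). -/
structure Multigraph (V : Type*) (E : Type*) where
  src : E → V
  tgt : E → V

namespace Multigraph

variable {V E V' E' : Type*}

/-- Walks in a multigraph, traversing edges in either direction. -/
inductive Walk (G : Multigraph V E) : V → V → Type _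
  | nil (v : V) : Walk G v v
  | cons {u v w : V} (e : E) (hs : G.src e = u) (ht : G.tgt e = v) (p : Walk G v w) : Walk G u w
  | cons' {u v w : V} (e : E) (hs : G.src e = v) (ht : G.tgt e = u) (p : Walk G v w) : Walk G u w

def Walk.edges {G : Multigraph V E} : ∀ {u v : V}, G.Walk u v → List E
  | _, _, .nil _ => []
  | _, _, .cons e _ _ p => e :: p.edges
  | _, _, .cons' e _ _ p => e :: p.edges

def Walk.support {G : Multigraph V E} : ∀ {u v : V}, G.Walk u v → List V
  | u, _, .nil _ => [u]
  | u, _, .cons _ _ _ p => u :: p.support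
  | u, _, .cons' _ _ _ p => u :: p.support

/-- An edge is incident with a vertex. -/
def Inc (G : Multigraph V E) (e : E) (v : V) : Prop := G.src e = v ∨ G.tgt e = v

/-- The end of an edge other than `v`. -/
noncomputable def otherEnd (G : Multigraph V E) (v : V) (e : E) : V :=
  if G.src e = v then G.tgt e else G.src e

lemma otherEnd_ne (G : Multigraph V E) {v : V} {e : E} (hinc : G.Inc e v)
    (hnl : ¬ (G.src e = v ∧ G.tgt e = v)) : G.otherEnd v e ≠ v := by
  unfold otherEnd
  split_ifs with h
  · exact fun ht => hnl ⟨h, ht⟩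
  · exact fun hs => (hinc.elim h (fun ht => h (by
      exact absurd hs (fun hs' => h hs')))) |>.elim
  
/-- Degree of a vertex (each loop counts twice). -/
noncomputable def degree (G : Multigraph V E) (v : V) : ℕ :=
  Set.ncard {e | G.src e = v} + Set.ncard {e | G.tgt e = v}

/-- The edge cut determined by a vertex set `S`: edges with exactly one end in `S`. -/
def cutEdges (G : Multigraph V E) (S : Set V) : Set E :=
  {e | (G.src e ∈ S ∧ G.tgt e ∉ S) ∨ (G.src e ∉ S ∧ G.tgt e ∈ S)}

/-- A set `W` is `k`-edge-connected in `G`: no edge cut of size `< k` separates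
two vertices of `W`. -/
def EdgeConnSet (G : Multigraph V E) (k : ℕ) (W : Set V) : Prop :=
  ∀ S : Set V, (G.cutEdges S).ncard < k → ∀ x ∈ W, ∀ y ∈ W, (x ∈ S ↔ y ∈ S)

/-- There exist `k` pairwise edge-disjoint paths (trails) from `u` to `v`. -/
def EDWalks (G : Multigraph V E) (u v : V) (k : ℕ) : Prop :=
  ∃ P : Fin k → G.Walk u v, (∀ i, (P i).edges.Nodup) ∧
    ∀ i j, i ≠ j → ∀ e ∈ (P i).edges, e ∉ (P j).edges

/-- The neighbourhood of `v`: vertices other than `v` joined to `v` by an edge. -/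
def nbhd (G : Multigraph V E) (v : V) : Set V :=
  {u | u ≠ v ∧ ∃ e, (G.src e = v ∧ G.tgt e = u) ∨ (G.src e = u ∧ G.tgt e = v)}

/-- A strong immersion of `H` in `G`. -/
structure StrongImm (H : Multigraph V' E') (G : Multigraph V E) where
  vmap : V' → V
  vinj : Function.Injective vmap
  path : ∀ e : E', G.Walk (vmap (H.src e)) (vmap (H.tgt e))
  edges_nodup : ∀ e, (path e).edges.Nodup
  edisj : ∀ e f, e ≠ f → ∀ x ∈ (path e).edges, x ∉ (path f).edges
  avoid : ∀ (e : E') (u : V'), u ≠ H.src e → u ≠ H.tgt e → vmap u ∉ (path e).support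

def StrongImmersion (H : Multigraph V' E') (G : Multigraph V E) : Prop :=
  Nonempty (StrongImm H G)

/-- A weak immersion of `H` in `G`. -/
structure WeakImm (H : Multigraph V' E') (G : Multigraph V E) where
  vmap : V' → V
  vinj : Function.Injective vmap
  path : ∀ e : E', G.Walk (vmap (H.src e)) (vmap (H.tgt e))
  edges_nodup : ∀ e, (path e).edges.Nodup
  edisj : ∀ e f, e ≠ f → ∀ x ∈ (path e).edges, x ∉ (path f).edges

def WeakImmersion (H : Multigraph V' E') (G : Multigraph V E) : Prop :=
  Nonempty (WeakImm H G)

/-- The complete graph `K n` as a multigraph. -/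
def completeMG (n : ℕ) : Multigraph (Fin n) {p : Fin n × Fin n // p.1 < p.2} :=
  ⟨fun p => p.1.1, fun p => p.1.2⟩

/-- A path-like decomposition of the part of `G` induced on `S`, with respect to
an ordered set `X ⊆ S`: an ordering of `X` and a near-partition of `S \ X` into bags. -/
structure PathLikeDecomp (G : Multigraph V E) (S : Set V) (X : Set V) where
  t : ℕ
  ord : Fin t → V
  ord_inj : Function.Injective ord
  ord_range : Set.range ord = X
  bag : Fin (t + 1) → Set V
  bag_disj : ∀ i j, i ≠ j → Disjoint (bag i) (bag j)
  bag_union : (⋃ i, bag i) = S \ X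

namespace PathLikeDecomp

variable {G : Multigraph V E} {S X : Set V} (P : PathLikeDecomp G S X)

/-- Vertices strictly to the left of the `i`-th ordered vertex. -/
def leftSet (i : Fin P.t) : Set V :=
  {v | ∃ j, j < i ∧ v = P.ord j} ∪ ⋃ (j : Fin (P.t + 1)) (_ : (j : ℕ) ≤ (i : ℕ)), P.bag j

/-- Vertices strictly to the right of the `i`-th ordered vertex. -/
def rightSet (i : Fin P.t) : Set V :=
  {v | ∃ j, i < j ∧ v = P.ord j} ∪ ⋃ (j : Fin (P.t + 1)) (_ : (i : ℕ) < (j : ℕ)), P.bag j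

/-- The `x_i`-cut of the decomposition. -/
def cutAt (i : Fin P.t) : Set E :=
  {e | (G.src e ∈ P.leftSet i ∧ G.tgt e ∈ P.rightSet i) ∨
       (G.src e ∈ P.rightSet i ∧ G.tgt e ∈ P.leftSet i)}

/-- The decomposition has width less than `w`. -/
def WidthLt (w : ℕ) : Prop := ∀ i, (P.cutAt i).ncard < w

/-- A set `Z` is `p`-bounded in the decomposition. -/
def Bounded (p : ℕ) (Z : Set V) : Prop :=
  (X ∩ Z).ncard + Set.ncard {j : Fin (P.t + 1) | (P.bag j ∩ Z).Nonempty} ≤ p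

end PathLikeDecomp

/-- `W` is `(a,w,p)`-linear in `G`. -/
def Linear (G : Multigraph V E) (W : Set V) (a w p : ℕ) : Prop :=
  ∃ A : Set V, A ⊆ W ∧ A.ncard ≤ a ∧
    ∃ P : PathLikeDecomp G {v | v ∉ A} (W \ A), P.WidthLt w ∧
      ∀ v ∈ A, P.Bounded p (G.nbhd v)

/-- A graph is `α`-basic if the set of its vertices of degree at least `α` is `α`-linear. -/
def Basic (G : Multigraph V E) (α : ℕ) : Prop :=
  Linear G {v | α ≤ G.degree v} α α α

/-- A tree-cut decomposition of `G` indexed by a tree on `τ`. -/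
structure TreeCutDecomp (G : Multigraph V E) (τ : Type*) where
  tree : SimpleGraph τ
  tree_isTree : tree.IsTree
  bag : τ → Set V
  bag_disj : ∀ i j, i ≠ j → Disjoint (bag i) (bag j)
  bag_union : (⋃ i, bag i) = Set.univ

namespace TreeCutDecomp

variable {τ : Type*} {G : Multigraph V E} (D : TreeCutDecomp G τ)

/-- The union of the bags on the `v`-side of the tree edge `uv`. -/
def sideVerts (u v : τ) : Set V :=
  ⋃ (x : τ) (_ : (D.tree.deleteEdges {s(u, v)}).Reachable v x), D.bag x

/-- The edge cut of `G` determined by the tree edge `uv`. -/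
def edgeCut (u v : τ) : Set E := G.cutEdges (D.sideVerts u v)

/-- The adhesion of the decomposition. -/
noncomputable def adhesion : ℕ :=
  sSup {n | ∃ u v, D.tree.Adj u v ∧ n = (D.edgeCut u v).ncard}

/-- The decomposition has adhesion less than `α`. -/
def AdhesionLt (α : ℕ) : Prop := ∀ u v, D.tree.Adj u v → (D.edgeCut u v).ncard < α

lemma exists_bag (v : V) : ∃ t, v ∈ D.bag t :=
  Set.mem_iUnion.mp (D.bag_union.symm ▸ Set.mem_univ v)

/-- The tree node whose bag contains `v`. -/
noncomputable def nodeOf (v : V) : τ := (D.exists_bag v).choose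

lemma nodeOf_mem (v : V) : v ∈ D.bag (D.nodeOf v) := (D.exists_bag v).choose_spec

/-- Connected components of the tree with node `t` removed. -/
def PeriphComp (t : τ) := (D.tree.induce {x : τ | x ≠ t}).ConnectedComponent

/-- Vertices of the torso at `t`: core vertices and peripheral vertices. -/
def TorsoV (t : τ) := {v : V // v ∈ D.bag t} ⊕ D.PeriphComp t

/-- The consolidation map onto the torso at `t`. -/
noncomputable def torsoProj (t : τ) (v : V) : D.TorsoV t :=
  if h : v ∈ D.bag t then Sum.inl ⟨v, h⟩
  else Sum.inr ((D.tree.induce {x : τ | x ≠ t}).connectedComponentMk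
    ⟨D.nodeOf v, fun he => h (he ▸ D.nodeOf_mem v)⟩)

/-- Edges of the torso at `t`: all edges except the loops created by consolidation. -/
def TorsoE (t : τ) :=
  {e : E // ∀ c : D.PeriphComp t,
    ¬ (D.torsoProj t (G.src e) = Sum.inr c ∧ D.torsoProj t (G.tgt e) = Sum.inr c)}

/-- The torso of the tree-cut decomposition at `t`. -/
noncomputable def torso (t : τ) : Multigraph (D.TorsoV t) (D.TorsoE t) :=
  ⟨fun e => D.torsoProj t (G.src e.1), fun e => D.torsoProj t (G.tgt e.1)⟩

end TreeCutDecomp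

/-- A witness that `G` is a `k`-edge sum of `G₁` and `G₂`. -/
structure EdgeSumWitness (G : Multigraph V E) {V₁ E₁ V₂ E₂ : Type*}
    (G₁ : Multigraph V₁ E₁) (G₂ : Multigraph V₂ E₂) (k : ℕ) where
  v₁ : V₁
  v₂ : V₂
  noloop₁ : ∀ e, ¬ (G₁.src e = v₁ ∧ G₁.tgt e = v₁)
  noloop₂ : ∀ e, ¬ (G₂.src e = v₂ ∧ G₂.tgt e = v₂)
  deg₁ : G₁.degree v₁ = k
  deg₂ : G₂.degree v₂ = k
  π : {e : E₁ // G₁.Inc e v₁} ≃ {e : E₂ // G₂.Inc e v₂}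
  φ : V ≃ ({x : V₁ // x ≠ v₁} ⊕ {x : V₂ // x ≠ v₂})
  ψ : E ≃ ({e : E₁ // ¬ G₁.Inc e v₁} ⊕ {e : E₂ // ¬ G₂.Inc e v₂} ⊕ {e : E₁ // G₁.Inc e v₁})
  ends₁ : ∀ (e : E) (e₁ : {e : E₁ // ¬ G₁.Inc e v₁}), ψ e = Sum.inl e₁ →
    s(G.src e, G.tgt e) =
      s(φ.symm (Sum.inl ⟨G₁.src e₁.1, fun h => e₁.2 (Or.inl h)⟩),
        φ.symm (Sum.inl ⟨G₁.tgt e₁.1, fun h => e₁.2 (Or.inr h)⟩))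
  ends₂ : ∀ (e : E) (e₂ : {e : E₂ // ¬ G₂.Inc e v₂}), ψ e = Sum.inr (Sum.inl e₂) →
    s(G.src e, G.tgt e) =
      s(φ.symm (Sum.inr ⟨G₂.src e₂.1, fun h => e₂.2 (Or.inl h)⟩),
        φ.symm (Sum.inr ⟨G₂.tgt e₂.1, fun h => e₂.2 (Or.inr h)⟩))
  ends_cross : ∀ (e : E) (e₁ : {e : E₁ // G₁.Inc e v₁}), ψ e = Sum.inr (Sum.inr e₁) →
    s(G.src e, G.tgt e) =
      s(φ.symm (Sum.inl ⟨G₁.otherEnd v₁ e₁.1, G₁.otherEnd_ne e₁.2 (noloop₁ e₁.1)⟩),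
        φ.symm (Sum.inr ⟨G₂.otherEnd v₂ (π e₁).1, G₂.otherEnd_ne (π e₁).2 (noloop₂ (π e₁).1)⟩))

/-- `G` is a `k`-edge sum of `G₁` and `G₂`. -/
def IsEdgeSum (G : Multigraph V E) {V₁ E₁ V₂ E₂ : Type*}
    (G₁ : Multigraph V₁ E₁) (G₂ : Multigraph V₂ E₂) (k : ℕ) : Prop :=
  Nonempty (EdgeSumWitness G G₁ G₂ k)

/-- A witness of an edge sum is grounded. -/
def EdgeSumWitness.Grounded {V₁ E₁ V₂ E₂ : Type*} {G : Multigraph V E}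
    {G₁ : Multigraph V₁ E₁} {G₂ : Multigraph V₂ E₂} {k : ℕ}
    (wit : EdgeSumWitness G G₁ G₂ k) : Prop :=
  (∃ v₁' : V₁, v₁' ≠ wit.v₁ ∧ G₁.EDWalks wit.v₁ v₁' k) ∧
  (∃ v₂' : V₂, v₂' ≠ wit.v₂ ∧ G₂.EDWalks wit.v₂ v₂' k)

/-- The graph obtained from `G` by consolidating the set `S` to a single vertex. -/
noncomputable def consolidate (G : Multigraph V E) (S : Set V) :
    Multigraph ({v : V // v ∉ S} ⊕ Unit) {e : E // ¬ (G.src e ∈ S ∧ G.tgt e ∈ S)} where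
  src := fun e => if h : G.src e.1 ∈ S then Sum.inr () else Sum.inl ⟨G.src e.1, h⟩
  tgt := fun e => if h : G.tgt e.1 ∈ S then Sum.inr () else Sum.inl ⟨G.tgt e.1, h⟩

/-- The auxiliary adjacency: `m` pairwise edge-disjoint `x`–`y` paths avoiding `W ∖ {x,y}`. -/
def auxAdj (G : Multigraph V E) (W : Set V) (m : ℕ) (x y : V) : Prop :=
  x ∈ W ∧ y ∈ W ∧ ∃ P : Fin m → G.Walk x y, (∀ i, (P i).edges.Nodup) ∧
    (∀ i j, i ≠ j → ∀ e ∈ (P i).edges, e ∉ (P j).edges) ∧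
    (∀ i, ∀ v ∈ (P i).support, v ∈ W → v = x ∨ v = y)

/-- The auxiliary simple graph `G(m, W)`. -/
def auxGraph (G : Multigraph V E) (W : Set V) (m : ℕ) : SimpleGraph V where
  Adj x y := x ≠ y ∧ (G.auxAdj W m x y ∨ G.auxAdj W m y x)
  symm := ⟨fun x y h => ⟨h.1.symm, h.2.symm⟩⟩
  loopless := ⟨fun x h => h.1 rfl⟩

end Multigraph

/-- `H` contains `K_{1,k}` as a minor: a centre branch set joined to `k` pairwise
disjoint branch sets, all inducing connected subgraphs. -/
def SimpleGraph.HasStarMinor {V : Type*} (H : SimpleGraph V) (k : ℕ) : Prop :=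
  ∃ C : Fin (k + 1) → Set V, (∀ i, (C i).Nonempty) ∧
    (∀ i, (H.induce (C i)).Connected) ∧
    (∀ i j, i ≠ j → Disjoint (C i) (C j)) ∧
    (∀ i, i ≠ 0 → ∃ u ∈ C 0, ∃ v ∈ C i, H.Adj u v)

namespace Multigraph

/-- The graph `P_k`: a path `0, 1, …, k` with each edge replaced by `k` parallel edges. -/
def pathPower (k : ℕ) : Multigraph (Fin (k + 1)) (Fin k × Fin k) :=
  ⟨fun e => e.1.castSucc, fun e => e.1.succ⟩

end Multigraph

/-!
A cut of `P_k` that separates two vertices separates some consecutive pair `i, i + 1`, and then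
contains all `k` edges between them. A walk in `P_k` changes the vertex index by at most one per
step, so it visits every vertex between its ends; hence, of three branch vertices, the middle
one lies on the path joining the outer two.
-/

namespace Multigraph

variable {V E : Type*} {G : Multigraph V E}

theorem Walk.exists_mem_support_eq_of_mem_uIcc (f : V → ℤ)
    (hf : ∀ e, |f (G.src e) - f (G.tgt e)| ≤ 1) {a b : V} (p : G.Walk a b) {m : ℤ}
    (hm : m ∈ Set.uIcc (f a) (f b)) : ∃ v ∈ p.support, f v = m := by
  induction p with
  | nil v => exact ⟨v, List.mem_singleton_self v, by simpa [eq_comm] using hm⟩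
  | @cons u v w e hs ht p ih | @cons' u v w e hs ht p ih =>
    by_cases hu : f u = m
    · exact ⟨u, List.mem_cons_self .., hu⟩
    have hstep := abs_le.mp (hf e)
    rw [hs, ht] at hstep
    rw [Set.mem_uIcc] at hm
    obtain ⟨x, hx, hfx⟩ := ih (Set.mem_uIcc.mpr (by omega))
    exact ⟨x, List.mem_cons_of_mem _ hx, hfx⟩

theorem not_strongImmersion_completeMG_three (f : V → ℤ) (hf_inj : Function.Injective f)
    (hf : ∀ e, |f (G.src e) - f (G.tgt e)| ≤ 1) :
    ¬ StrongImmersion (completeMG 3) G := by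
  rintro ⟨imm⟩
  have avoids : ∀ (i j l : Fin 3) (hij : i < j), l ≠ i → l ≠ j →
      f (imm.vmap l) ∉ Set.uIcc (f (imm.vmap i)) (f (imm.vmap j)) := by
    intro i j l hij hli hlj hl
    obtain ⟨v, hv, hfv⟩ :=
      (imm.path ⟨(i, j), hij⟩).exists_mem_support_eq_of_mem_uIcc f hf hl
    exact imm.avoid ⟨(i, j), hij⟩ l hli hlj (hf_inj hfv ▸ hv)
  have hne : ∀ i j : Fin 3, i ≠ j → f (imm.vmap i) ≠ f (imm.vmap j) :=
    fun i j hij h => hij (imm.vinj (hf_inj h))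
  have h01 := hne 0 1 (by decide)
  have h02 := hne 0 2 (by decide)
  have h12 := hne 1 2 (by decide)
  have a01 := avoids 0 1 2 (by decide) (by decide) (by decide)
  have a02 := avoids 0 2 1 (by decide) (by decide) (by decide)
  have a12 := avoids 1 2 0 (by decide) (by decide) (by decide)
  simp only [Set.mem_uIcc] at a01 a02 a12
  omega

theorem pathPower_le_ncard_cutEdges {k : ℕ} {S : Set (Fin (k + 1))} (i : Fin k)
    (hS : ¬ (i.castSucc ∈ S ↔ i.succ ∈ S)) : k ≤ ((pathPower k).cutEdges S).ncard := by
  have hsub : Set.range (Prod.mk i) ⊆ (pathPower k).cutEdges S := by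
    rintro _ ⟨j, rfl⟩
    simp only [cutEdges, pathPower, Set.mem_ofPred_eq]
    tauto
  calc k = (Set.range (Prod.mk i : Fin k → Fin k × Fin k)).ncard := by
        rw [Set.ncard_range_of_injective (Prod.mk_right_injective i), Nat.card_eq_fintype_card,
          Fintype.card_fin]
    _ ≤ _ := Set.ncard_le_ncard hsub

theorem pathPower_edgeConnSet (k : ℕ) : (pathPower k).EdgeConnSet k Set.univ := by
  intro S hS x _ y _
  have step (i : Fin k) : i.castSucc ∈ S ↔ i.succ ∈ S :=
    by_contra fun h => (pathPower_le_ncard_cutEdges i h).not_gt hS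
  have hconst : ∀ z, z ∈ S ↔ 0 ∈ S := Fin.induction Iff.rfl fun i ih => (step i).symm.trans ih
  exact (hconst x).trans (hconst y).symm

theorem abs_pathPower_src_sub_tgt_le_one {k : ℕ} (e : Fin k × Fin k) :
    |((pathPower k).src e : ℤ) - ((pathPower k).tgt e : ℤ)| ≤ 1 := by
  simp [pathPower]

end Multigraph

theorem pathPower_edgeConnected_and_no_K3_general (k : ℕ) :
    (Multigraph.pathPower k).EdgeConnSet k Set.univ ∧
      ¬ Multigraph.StrongImmersion (Multigraph.completeMG 3) (Multigraph.pathPower k) :=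
  ⟨Multigraph.pathPower_edgeConnSet k,
    Multigraph.not_strongImmersion_completeMG_three (fun v => (v : ℤ))
      (Nat.cast_injective.comp Fin.val_injective) Multigraph.abs_pathPower_src_sub_tgt_le_one⟩

/-- for every `k ≥ 1`, `P_k` is `k`-edge-connected but contains no
strong immersion of `K₃`. -/
theorem pathPower_edgeConnected_and_no_K3 (k : ℕ) (hk : 1 ≤ k) :
    (Multigraph.pathPower k).EdgeConnSet k Set.univ ∧
      ¬ Multigraph.StrongImmersion (Multigraph.completeMG 3) (Multigraph.pathPower k) :=
  pathPower_edgeConnected_and_no_K3_general k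
end

section
/- Let G be a graph and t a positive integer. If G contains a set X of t+1 vertices such that no two vertices of X are separated in G by an edge cut of size less than t², then G contains K_t as a weak immersion. -/
open scoped Classical

/-!
Number the vertices of `X` as `x₀, …, x_t` and place `K_t` on `x₀, …, x_{t-1}`. Add a new
vertex `s` and, for every edge `ij` of `K_t`, two new edges: one from `s` to `x_i` and one from
`s` to `x_j`, so `t(t-1) ≤ t²` new edges in all. A cut separating `s` from `x_t` either leaves
some `x_i` on the side of `s`, and then it separates `x_i` from `x_t` in `G` and has at least `t²`
edges, or it contains all the new edges. By Menger's theorem there are `t(t-1)` edge-disjoint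
trails from `s` to `x_t`. Cut after its last new edge, each of them yields a trail of `G` from
some `x_i` to `x_t`, and each new edge is the last new edge of exactly one of them; so every edge
`ij` of `K_t` gets edge-disjoint trails from `x_i` and from `x_j` to `x_t`, whose concatenation
is the trail of `ij`.

Menger's theorem for edges is proved with integral flows bounded by `1`: augmenting along residual
paths yields a flow of value `k` unless some cut has fewer than `k` edges, and such a flow splits
into `k` edge-disjoint trails.
-/

theorem List.exists_isChain_cons_nodup_of_reflTransGen {α : Type*} {r : α → α → Prop}
    {a b : α} (h : Relation.ReflTransGen r a b) :
    ∃ l, List.IsChain r (a :: l) ∧ (a :: l).Nodup ∧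
      (a :: l).getLast (List.cons_ne_nil _ _) = b := by
  induction h using Relation.ReflTransGen.head_induction_on with
  | refl => exact ⟨[], .singleton _, by simp, rfl⟩
  | @head a c hac _ ih =>
    obtain ⟨l, hl, hnd, hlast⟩ := ih
    by_cases ha : a ∈ c :: l
    · obtain ⟨s, t, hst⟩ := List.append_of_mem ha
      simp only [hst] at hl hnd hlast
      rw [List.getLast_append_of_ne_nil _ (List.cons_ne_nil _ _)] at hlast
      exact ⟨t, hl.right_of_append, hnd.of_append_right, hlast⟩
    · exact ⟨c :: l, .cons_cons hac hl, .cons ha hnd, by simpa using hlast⟩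

namespace Multigraph

variable {V E ι : Type*} {G : Multigraph V E}

namespace Walk

@[simp] lemma edges_nil (v : V) : (nil v : G.Walk v v).edges = [] := rfl

@[simp] lemma edges_cons {u v w : V} (e : E) (hs : G.src e = u) (ht : G.tgt e = v)
    (p : G.Walk v w) : (cons e hs ht p).edges = e :: p.edges := rfl

@[simp] lemma edges_cons' {u v w : V} (e : E) (hs : G.src e = v) (ht : G.tgt e = u)
    (p : G.Walk v w) : (cons' e hs ht p).edges = e :: p.edges := rfl

def append : ∀ {u v w : V}, G.Walk u v → G.Walk v w → G.Walk u w
  | _, _, _, nil _, q => q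
  | _, _, _, cons e hs ht p, q => cons e hs ht (p.append q)
  | _, _, _, cons' e hs ht p, q => cons' e hs ht (p.append q)

@[simp] lemma edges_append : ∀ {u v w : V} (p : G.Walk u v) (q : G.Walk v w),
    (p.append q).edges = p.edges ++ q.edges
  | _, _, _, nil _, _ => rfl
  | _, _, _, cons _ _ _ p, q => congrArg _ (edges_append p q)
  | _, _, _, cons' _ _ _ p, q => congrArg _ (edges_append p q)

def reverse : ∀ {u v : V}, G.Walk u v → G.Walk v u
  | _, _, nil v => nil v
  | _, _, cons e hs ht p => p.reverse.append (cons' e hs ht (nil _))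
  | _, _, cons' e hs ht p => p.reverse.append (cons e hs ht (nil _))

@[simp] lemma edges_reverse : ∀ {u v : V} (p : G.Walk u v), p.reverse.edges = p.edges.reverse
  | _, _, nil _ => rfl
  | _, _, cons _ _ _ p => by simp [reverse, edges_reverse p]
  | _, _, cons' _ _ _ p => by simp [reverse, edges_reverse p]

def copy {u v u' v' : V} (p : G.Walk u v) (hu : u = u') (hv : v = v') : G.Walk u' v' :=
  hu ▸ hv ▸ p

@[simp] lemma edges_copy {u v u' v' : V} (p : G.Walk u v) (hu : u = u') (hv : v = v') :
    (p.copy hu hv).edges = p.edges := by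
  subst hu hv; rfl

end Walk

def EdgeDisjointTrails {a b : ι → V} (P : ∀ i, G.Walk (a i) (b i)) : Prop :=
  (∀ i, (P i).edges.Nodup) ∧ ∀ i j, i ≠ j → ∀ e ∈ (P i).edges, e ∉ (P j).edges

lemma EdgeDisjointTrails.fin_cons {k : ℕ} {u v : V} {W : G.Walk u v} {P : Fin k → G.Walk u v}
    (hW : W.edges.Nodup) (hP : EdgeDisjointTrails P)
    (hWP : ∀ i, ∀ e ∈ (P i).edges, e ∉ W.edges) :
    EdgeDisjointTrails (Fin.cons W P : Fin (k + 1) → G.Walk u v) := by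
  refine ⟨Fin.cases hW hP.1, fun i j hij e hi hj => ?_⟩
  induction i using Fin.cases <;> induction j using Fin.cases
  · exact hij rfl
  · exact hWP _ e hj hi
  · exact hWP _ e hi hj
  · exact hP.2 _ _ (fun h => hij (congrArg _ h)) e hi hj

section Flow

def UnitBounded (f : E → ℤ) : Prop := ∀ e, -1 ≤ f e ∧ f e ≤ 1

lemma UnitBounded.update {f : E → ℤ} (hf : UnitBounded f) (e : E) {c : ℤ}
    (hc : -1 ≤ c ∧ c ≤ 1) : UnitBounded (Function.update f e c) := fun e' => by
  by_cases h : e' = e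
  · simpa [h] using hc
  · simpa [h] using hf e'

noncomputable def zeroOn (f : E → ℤ) (l : List E) : E → ℤ :=
  fun e => if e ∈ l then 0 else f e

lemma UnitBounded.zeroOn {f : E → ℤ} (hf : UnitBounded f) (l : List E) :
    UnitBounded (zeroOn f l) := fun e => by
  by_cases h : e ∈ l
  · simp [Multigraph.zeroOn, h]
  · simpa [Multigraph.zeroOn, h] using hf e

@[simp] lemma zeroOn_nil (f : E → ℤ) : zeroOn f [] = f := rfl

lemma zeroOn_cons (f : E → ℤ) (e : E) (l : List E) :
    zeroOn f (e :: l) = zeroOn (Function.update f e 0) l := by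
  ext e'
  by_cases h : e' = e <;> simp [zeroOn, h]

variable (G) in
noncomputable def incidence (e : E) : V → ℤ := Pi.single (G.src e) 1 - Pi.single (G.tgt e) 1

variable (G) in
def Residual (f : E → ℤ) (x y : V) : Prop :=
  ∃ e, (G.src e = x ∧ G.tgt e = y ∧ f e < 1) ∨ (G.src e = y ∧ G.tgt e = x ∧ -1 < f e)

variable [Fintype E]

lemma card_support_update_zero_lt {f : E → ℤ} {e : E} (he : f e ≠ 0) :
    (Finset.univ.filter (Function.update f e 0 · ≠ 0)).card <
      (Finset.univ.filter (f · ≠ 0)).card := by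
  refine Finset.card_lt_card ((Finset.ssubset_iff_of_subset fun e' => ?_).mpr
    ⟨e, by simp [he], by simp⟩)
  by_cases h : e' = e <;> simp [h]

variable (G) in
/-- `f e` units flow along `e` from its source to its target. -/
noncomputable def netFlow (f : E → ℤ) : V → ℤ := ∑ e, f e • G.incidence e

variable (G) in
structure IsUnitFlow (f : E → ℤ) (u v : V) (k : ℕ) : Prop where
  bounded : UnitBounded f
  netFlow_source : G.netFlow f u = k
  netFlow_eq_zero : ∀ w, w ≠ u → w ≠ v → G.netFlow f w = 0

lemma netFlow_update (f : E → ℤ) (e : E) (c : ℤ) :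
    G.netFlow (Function.update f e c) = G.netFlow f + (c - f e) • G.incidence e := by
  have : Function.update f e c = f + Pi.single e (c - f e) := by
    ext e'; by_cases h : e' = e <;> simp [h]
  simp [netFlow, this, add_smul, Finset.sum_add_distrib, Pi.single_apply, ite_smul]

lemma exists_step_of_netFlow_pos {f : E → ℤ} (hf : UnitBounded f) {x : V}
    (hx : 0 < G.netFlow f x) :
    ∃ (e : E) (y : V) (s : G.Walk x y), s.edges = [e] ∧ y ≠ x ∧ f e ≠ 0 ∧
      G.netFlow (Function.update f e 0) = G.netFlow f - Pi.single x 1 + Pi.single y 1 := by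
  obtain ⟨e, -, he⟩ := Finset.exists_lt_of_sum_lt (s := Finset.univ) (f := fun _ => (0 : ℤ))
    (by simpa [netFlow, Finset.sum_apply] using hx)
  have hfe := hf e
  refine ⟨e, ?_⟩
  by_cases hs : G.src e = x <;> by_cases ht : G.tgt e = x
  · simp [incidence, hs, ht] at he
  · have : f e = 1 := by simp [incidence, hs, ht] at he; omega
    refine ⟨G.tgt e, .cons e hs rfl (.nil _), rfl, ht, by omega, ?_⟩
    rw [netFlow_update, this, incidence, hs]
    abel
  · have : f e = -1 := by simp [incidence, hs, ht] at he; omega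
    refine ⟨G.src e, .cons' e rfl ht (.nil _), rfl, hs, by omega, ?_⟩
    rw [netFlow_update, this, incidence, ht]
    abel
  · simp [incidence, hs, ht] at he

lemma exists_trail_of_netFlow_pos {f : E → ℤ} (hf : UnitBounded f) {x v : V}
    (hx : 0 < G.netFlow f x) (hnonneg : ∀ w, w ≠ v → 0 ≤ G.netFlow f w) :
    ∃ W : G.Walk x v, W.edges.Nodup ∧ (∀ e ∈ W.edges, f e ≠ 0) ∧
      G.netFlow (zeroOn f W.edges) = G.netFlow f - Pi.single x 1 + Pi.single v 1 := by
  induction hn : (Finset.univ.filter (f · ≠ 0)).card using Nat.strong_induction_on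
    generalizing f x with
  | _ n ih =>
  obtain ⟨e, y, s, hs, hyx, hfe, hflow⟩ := exists_step_of_netFlow_pos hf hx
  set f' := Function.update f e 0
  have hf' : UnitBounded f' := hf.update e (by norm_num)
  have hflow' (w : V) : G.netFlow f' w =
      G.netFlow f w - (if w = x then 1 else 0) + (if w = y then 1 else 0) := by
    simp [hflow, Pi.single_apply]
  obtain ⟨W, hWnd, hWf, hWflow⟩ : ∃ W : G.Walk y v, W.edges.Nodup ∧
      (∀ e ∈ W.edges, f' e ≠ 0) ∧
      G.netFlow (zeroOn f' W.edges) = G.netFlow f' - Pi.single y 1 + Pi.single v 1 := by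
    by_cases hyv : y = v
    · subst hyv
      exact ⟨.nil y, by simp, by simp, by simp⟩
    refine ih _ ?_ hf' ?_ (fun w hw => ?_) rfl
    · exact hn ▸ card_support_update_zero_lt hfe
    · have := hnonneg y hyv
      simp [hflow', hyx]; omega
    · have := hnonneg w hw
      rw [hflow']
      split_ifs with h1 h2 <;> subst_vars <;> omega
  have he : e ∉ W.edges := fun h => hWf e h (by simp [f'])
  refine ⟨s.append W, ?_, ?_, ?_⟩
  · simpa [hs, he] using hWnd
  · simp only [Walk.edges_append, hs, List.singleton_append, List.mem_cons, forall_eq_or_imp]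
    refine ⟨hfe, fun e' he' h => hWf e' he' ?_⟩
    simp [f', Function.update_of_ne (ne_of_mem_of_not_mem he' he), h]
  · rw [Walk.edges_append, hs, List.singleton_append, zeroOn_cons, hWflow, hflow]
    abel

lemma IsUnitFlow.exists_edgeDisjointTrails {u v : V} (huv : u ≠ v) :
    ∀ {k : ℕ} {f : E → ℤ}, G.IsUnitFlow f u v k →
      ∃ P : Fin k → G.Walk u v, EdgeDisjointTrails P ∧ ∀ i, ∀ e ∈ (P i).edges, f e ≠ 0
  | 0, _, _ => ⟨Fin.elim0, ⟨nofun, nofun⟩, nofun⟩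
  | k + 1, f, hf => by
    have hnonneg (w : V) (hw : w ≠ v) : 0 ≤ G.netFlow f w := by
      by_cases hwu : w = u
      · simp [hwu, hf.netFlow_source]; positivity
      · simp [hf.netFlow_eq_zero w hwu hw]
    obtain ⟨W, hWnd, hWf, hflow⟩ := exists_trail_of_netFlow_pos (x := u) hf.bounded
      (by simp [hf.netFlow_source]) hnonneg
    have hg : G.IsUnitFlow (zeroOn f W.edges) u v k := by
      refine ⟨hf.bounded.zeroOn _, ?_, fun w hwu hwv => ?_⟩
      · simp [hflow, hf.netFlow_source, huv]
      · simp [hflow, hf.netFlow_eq_zero w hwu hwv, hwu, hwv]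
    obtain ⟨P, hP, hPg⟩ := IsUnitFlow.exists_edgeDisjointTrails huv hg
    have hPW (i : Fin k) (e : E) (he : e ∈ (P i).edges) : e ∉ W.edges ∧ f e ≠ 0 := by
      have := hPg i e he
      by_cases h : e ∈ W.edges <;> simp_all [zeroOn]
    refine ⟨Fin.cons W P, EdgeDisjointTrails.fin_cons hWnd hP fun i e he => (hPW i e he).1,
      fun i => ?_⟩
    induction i using Fin.cases
    · exact hWf
    · exact fun e he => (hPW _ e he).2

lemma exists_push_of_residual {f : E → ℤ} (hf : UnitBounded f) {a b : V}
    (h : G.Residual f a b) :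
    ∃ g, UnitBounded g ∧ (∀ e, g e ≠ f e → G.Inc e a) ∧
      G.netFlow g = G.netFlow f + Pi.single a 1 - Pi.single b 1 := by
  have hunchanged (e : E) (c : ℤ) (e' : E) (h : Function.update f e c e' ≠ f e') : e' = e := by
    by_contra h'; simp [h'] at h
  obtain ⟨e, ⟨hs, ht, he⟩ | ⟨hs, ht, he⟩⟩ := h
  · refine ⟨Function.update f e (f e + 1), hf.update e (by have := hf e; omega),
      fun e' h => hunchanged _ _ e' h ▸ .inl hs, ?_⟩
    rw [netFlow_update, incidence, hs, ht]
    module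
  · refine ⟨Function.update f e (f e - 1), hf.update e (by have := hf e; omega),
      fun e' h => hunchanged _ _ e' h ▸ .inr ht, ?_⟩
    rw [netFlow_update, incidence, hs, ht]
    module

lemma exists_augment_of_isChain {a : V} {l : List V} {f : E → ℤ} (hf : UnitBounded f)
    (hl : List.IsChain (G.Residual f) (a :: l)) (hnd : (a :: l).Nodup) :
    ∃ g, UnitBounded g ∧ G.netFlow g =
      G.netFlow f + Pi.single a 1 - Pi.single ((a :: l).getLast (List.cons_ne_nil _ _)) 1 := by
  induction l generalizing a f with
  | nil => exact ⟨f, hf, by simp⟩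
  | cons b l ih =>
    rw [List.isChain_cons_cons] at hl
    obtain ⟨g₀, hg₀, hchanged, hflow₀⟩ := exists_push_of_residual hf hl.1
    have ha : a ∉ b :: l := (List.nodup_cons.mp hnd).1
    -- the flow changed only next to `a`, which the rest of the chain avoids
    have hl' : List.IsChain (G.Residual g₀) (b :: l) := by
      refine hl.2.imp_of_mem_imp fun x y hx hy ⟨e, he⟩ => ⟨e, ?_⟩
      have hfe : g₀ e = f e := by
        by_contra hne
        rcases hchanged e hne with h | h <;> rcases he with ⟨h1, h2, -⟩ | ⟨h1, h2, -⟩ <;>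
          simp_all
      rwa [hfe]
    obtain ⟨g, hg, hflow⟩ := ih hg₀ hl' (List.nodup_cons.mp hnd).2
    exact ⟨g, hg, by rw [hflow, hflow₀, List.getLast_cons_cons]; abel⟩

lemma exists_augment_of_reflTransGen {f : E → ℤ} (hf : UnitBounded f) {a b : V}
    (h : Relation.ReflTransGen (G.Residual f) a b) :
    ∃ g, UnitBounded g ∧ G.netFlow g = G.netFlow f + Pi.single a 1 - Pi.single b 1 := by
  obtain ⟨l, hl, hnd, rfl⟩ := List.exists_isChain_cons_nodup_of_reflTransGen h
  exact exists_augment_of_isChain hf hl hnd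

/-- Closedness under residual steps forces `f = 1` on the edges leaving `S` and `f = -1` on the
edges entering it. -/
lemma sum_netFlow_eq_ncard_cutEdges {f : E → ℤ} (hf : UnitBounded f) {S : Finset V}
    (hS : ∀ x y, x ∈ S → G.Residual f x y → y ∈ S) :
    ∑ x ∈ S, G.netFlow f x = (G.cutEdges S).ncard := by
  have hedge (e : E) :
      f e * ∑ x ∈ S, G.incidence e x = if e ∈ G.cutEdges S then 1 else 0 := by
    have := hf e
    simp only [incidence, Pi.sub_apply, Finset.sum_sub_distrib, Finset.sum_pi_single', cutEdges,
      Set.mem_ofPred_eq, Finset.mem_coe]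
    by_cases hs : G.src e ∈ S <;> by_cases ht : G.tgt e ∈ S <;> simp only [hs, ht] <;> norm_num
    · by_contra
      exact ht (hS _ _ hs ⟨e, .inl ⟨rfl, rfl, by omega⟩⟩)
    · by_contra
      exact hs (hS _ _ ht ⟨e, .inr ⟨rfl, rfl, by omega⟩⟩)
  calc ∑ x ∈ S, G.netFlow f x = ∑ e, f e * ∑ x ∈ S, G.incidence e x := by
        simp only [netFlow, Finset.sum_apply, Pi.smul_apply, smul_eq_mul, Finset.mul_sum]
        exact Finset.sum_comm
    _ = (G.cutEdges S).ncard := by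
        simp [hedge, Finset.sum_boole, Set.ncard_eq_toFinset_card']

lemma exists_isUnitFlow [Fintype V] {u v : V} (huv : u ≠ v) :
    ∀ {k : ℕ}, (∀ S : Set V, u ∈ S → v ∉ S → k ≤ (G.cutEdges S).ncard) →
      ∃ f, G.IsUnitFlow f u v k
  | 0, _ => ⟨0, fun _ => by norm_num, by simp [netFlow], fun _ _ _ => by simp [netFlow]⟩
  | k + 1, hcut => by
    obtain ⟨f, hf⟩ := exists_isUnitFlow huv fun S hu hv => (hcut S hu hv).trans' k.le_succ
    let S := Finset.univ.filter (Relation.ReflTransGen (G.Residual f) u)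
    by_cases hv : v ∈ S
    · obtain ⟨g, hg, hflow⟩ :=
        exists_augment_of_reflTransGen hf.bounded (Finset.mem_filter.mp hv).2
      refine ⟨g, hg, ?_, fun w hwu hwv => ?_⟩
      · simp [hflow, hf.netFlow_source, huv]
      · simp [hflow, hf.netFlow_eq_zero w hwu hwv, hwu, hwv]
    · -- otherwise the set reachable from `u` in the residual graph is a cut carrying value `k`
      have hsum : ∑ x ∈ S, G.netFlow f x = k := by
        rw [Finset.sum_eq_single_of_mem u (by simp [S, Relation.ReflTransGen.refl]) fun x hx hxu =>
          hf.netFlow_eq_zero x hxu (by rintro rfl; exact hv hx), hf.netFlow_source]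
      have := hcut S (by simp [S, Relation.ReflTransGen.refl]) (by simpa using hv)
      rw [sum_netFlow_eq_ncard_cutEdges hf.bounded fun x y hx hxy => by
        simpa [S] using (Finset.mem_filter.mp hx).2.tail hxy] at hsum
      omega

theorem edWalks_of_le_ncard_cutEdges [Fintype V] {u v : V} (huv : u ≠ v) {k : ℕ}
    (hcut : ∀ S : Set V, u ∈ S → v ∉ S → k ≤ (G.cutEdges S).ncard) :
    G.EDWalks u v k := by
  obtain ⟨f, hf⟩ := exists_isUnitFlow huv hcut
  obtain ⟨P, hP, -⟩ := hf.exists_edgeDisjointTrails huv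
  exact ⟨P, hP⟩

end Flow

variable (G) in
def addSource (σ : ι → V) : Multigraph (Option V) (E ⊕ ι) where
  src := Sum.elim (fun e => some (G.src e)) fun _ => none
  tgt := Sum.elim (fun e => some (G.tgt e)) fun i => some (σ i)

lemma ncard_cutEdges_add_le_addSource [Finite E] [Finite ι] {σ : ι → V} {S : Set (Option V)}
    (hS : none ∈ S) :
    (G.cutEdges {w | some w ∈ S}).ncard + {i | some (σ i) ∉ S}.ncard ≤
      ((G.addSource σ).cutEdges S).ncard := by
  rw [← Set.ncard_image_of_injective (G.cutEdges _) (Sum.inl_injective (β := ι)),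
    ← Set.ncard_image_of_injective {i | _} (Sum.inr_injective (α := E)),
    ← Set.ncard_union_eq (by simp [Set.disjoint_left])]
  refine Set.ncard_le_ncard ?_ (Set.toFinite _)
  rintro _ (⟨e, he, rfl⟩ | ⟨i, hi, rfl⟩)
  · exact he
  · exact .inl ⟨hS, hi⟩

lemma walk_addSource_cases {σ : ι → V} {a c : Option V} (W : (G.addSource σ).Walk a c) {b : V}
    (hc : c = some b) :
    (∃ a₀, a = some a₀ ∧ ∃ W₀ : G.Walk a₀ b, W.edges = W₀.edges.map Sum.inl) ∨
      ∃ i, ∃ W₀ : G.Walk (σ i) b, Sum.inr i :: W₀.edges.map Sum.inl <:+ W.edges := by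
  induction W with
  | nil => exact .inl ⟨b, hc, .nil b, rfl⟩
  | cons e hs ht W ih =>
    rcases ih hc with ⟨a₀, rfl, W₀, hW₀⟩ | ⟨i, W₀, hW₀⟩
    · cases e with
      | inl e =>
        exact .inl ⟨_, hs.symm, .cons e rfl (Option.some_injective _ ht) W₀, by simp [hW₀]⟩
      | inr i =>
        obtain rfl : σ i = a₀ := Option.some_injective _ ht
        exact .inr ⟨i, W₀, by simp [hW₀]⟩
    · exact .inr ⟨i, W₀, hW₀.trans (List.suffix_cons _ _)⟩
  | cons' e hs ht W ih =>
    rcases ih hc with ⟨a₀, rfl, W₀, hW₀⟩ | ⟨i, W₀, hW₀⟩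
    · cases e with
      | inl e =>
        exact .inl ⟨_, ht.symm, .cons' e (Option.some_injective _ hs) rfl W₀, by simp [hW₀]⟩
      | inr i => cases hs
    · exact .inr ⟨i, W₀, hW₀.trans (List.suffix_cons _ _)⟩

theorem exists_edgeDisjointTrails_of_le_cut [Fintype V] [Fintype E] [Fintype ι]
    (σ : ι → V) (b : V)
    (hcut : ∀ S : Set V, b ∉ S →
      Fintype.card ι ≤ (G.cutEdges S).ncard + {i | σ i ∉ S}.ncard) :
    ∃ T : ∀ i, G.Walk (σ i) b, EdgeDisjointTrails T := by
  obtain ⟨Q, hQ⟩ := (G.addSource σ).edWalks_of_le_ncard_cutEdges (Option.some_ne_none b).symm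
    fun S hS hbS => (hcut _ hbS).trans (ncard_cutEdges_add_le_addSource hS)
  have hsuffix (j : Fin (Fintype.card ι)) :
      ∃ i, ∃ W : G.Walk (σ i) b, Sum.inr i :: W.edges.map Sum.inl <:+ (Q j).edges := by
    rcases walk_addSource_cases (Q j) rfl with ⟨_, h, -⟩ | h
    · cases h
    · exact h
  choose p R hR using hsuffix
  have hRQ (j : Fin (Fintype.card ι)) (x : E) (hx : x ∈ (R j).edges) :
      Sum.inl x ∈ (Q j).edges :=
    (hR j).subset (List.mem_cons_of_mem _ (List.mem_map_of_mem hx))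
  have hp : p.Injective := fun j j' h => by_contra fun hne =>
    hQ.2 j j' hne _ ((hR j).subset List.mem_cons_self) (h ▸ (hR j').subset List.mem_cons_self)
  let e := Equiv.ofBijective p ((Fintype.bijective_iff_injective_and_card p).mpr ⟨hp, by simp⟩)
  refine ⟨fun i => (R (e.symm i)).copy (congrArg σ (e.apply_symm_apply i)) rfl,
    fun i => ?_, fun i i' hii' x hx hx' => ?_⟩
  · simpa using (List.nodup_cons.mp ((hQ.1 _).sublist (hR _).sublist)).2.of_map
  · simp only [Walk.edges_copy] at hx hx'
    exact hQ.2 _ _ (e.symm.injective.ne hii') _ (hRQ _ x hx) (hRQ _ x hx')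

lemma le_cut_of_edgeConnSet [Fintype ι] {k : ℕ} {X : Set V} (hX : G.EdgeConnSet k X)
    (hι : Fintype.card ι ≤ k) {σ : ι → V} (hσ : ∀ i, σ i ∈ X) {b : V} (hb : b ∈ X)
    (S : Set V) (hbS : b ∉ S) :
    Fintype.card ι ≤ (G.cutEdges S).ncard + {i | σ i ∉ S}.ncard := by
  by_cases h : ∃ i, σ i ∈ S
  · obtain ⟨i, hi⟩ := h
    have : k ≤ (G.cutEdges S).ncard :=
      not_lt.mp fun hlt => hbS ((hX S hlt _ (hσ i) _ hb).mp hi)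
    omega
  · push Not at h
    simp [h, Set.ncard_univ]

theorem weakImmersion_of_edgeDisjointTrails {V' E' : Type*} {H : Multigraph V' E'}
    {φ : V' → V} (hφ : Function.Injective φ) {b : V}
    {T : ∀ p : E' ⊕ E', G.Walk (φ (Sum.elim H.src H.tgt p)) b} (hT : EdgeDisjointTrails T) :
    H.WeakImmersion G := by
  refine ⟨⟨φ, hφ, fun e => (T (.inl e)).append (T (.inr e)).reverse, fun e => ?_,
    fun e f hef x hx hx' => ?_⟩⟩
  · change ((T (.inl e)).append (T (.inr e)).reverse).edges.Nodup
    rw [Walk.edges_append, Walk.edges_reverse, List.nodup_append, List.nodup_reverse]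
    simp only [List.mem_reverse]
    exact ⟨hT.1 _, hT.1 _, fun x hx y hy hxy => hT.2 _ _ Sum.inl_ne_inr x hx (hxy ▸ hy)⟩
  · change x ∈ ((T (.inl e)).append (T (.inr e)).reverse).edges at hx
    change x ∈ ((T (.inl f)).append (T (.inr f)).reverse).edges at hx'
    rw [Walk.edges_append, Walk.edges_reverse, List.mem_append, List.mem_reverse] at hx hx'
    rcases hx with hx | hx <;> rcases hx' with hx' | hx' <;>
      exact hT.2 _ _ (by simp [hef]) x hx hx'

lemma card_edges_completeMG_sum_le (t : ℕ) :
    Fintype.card ({p : Fin t × Fin t // p.1 < p.2} ⊕ {p : Fin t × Fin t // p.1 < p.2}) ≤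
      t ^ 2 := by
  have hinj : Function.Injective (Sum.elim (fun p => p.1) (fun p => p.1.swap) :
      {p : Fin t × Fin t // p.1 < p.2} ⊕ {p : Fin t × Fin t // p.1 < p.2} → Fin t × Fin t) :=
    Subtype.val_injective.sumElim (Prod.swap_injective.comp Subtype.val_injective)
      fun p q h => lt_asymm q.2 (by simpa [h] using p.2)
  simpa [sq] using Fintype.card_le_of_injective _ hinj

end Multigraph

theorem weakImmersion_clique_of_edgeConnected_general {V E : Type*} [Fintype V] [Fintype E]
    (G : Multigraph V E) (t : ℕ) (X : Set V) (hX : X.ncard = t + 1)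
    (hconn : G.EdgeConnSet (t ^ 2) X) :
    Multigraph.WeakImmersion (Multigraph.completeMG t) G := by
  obtain ⟨x⟩ : Nonempty (Fin (t + 1) ≃ X) :=
    Finite.card_eq.mp (by rw [Nat.card_coe_set_eq, hX, Nat.card_fin])
  let φ : Fin t → V := fun i => x i.castSucc
  have hφ : Function.Injective φ := fun i j h =>
    Fin.castSucc_injective _ (x.injective (Subtype.ext h))
  obtain ⟨T, hT⟩ := G.exists_edgeDisjointTrails_of_le_cut
    (fun p => φ (Sum.elim (Multigraph.completeMG t).src (Multigraph.completeMG t).tgt p))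
    (x (Fin.last t))
    (Multigraph.le_cut_of_edgeConnSet hconn (Multigraph.card_edges_completeMG_sum_le t)
      (fun _ => (x _).2) (x _).2)
  exact Multigraph.weakImmersion_of_edgeDisjointTrails hφ hT

/-- if `X` is a set of `t + 1` vertices no two of which are separated by an
edge cut of size less than `t²`, then `G` contains `K_t` as a weak immersion. -/
theorem weakImmersion_clique_of_edgeConnected {V E : Type*} [Fintype V] [Fintype E]
    (G : Multigraph V E) (t : ℕ) (ht : 1 ≤ t) (X : Set V) (hX : X.ncard = t + 1)
    (hconn : G.EdgeConnSet (t ^ 2) X) :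
    Multigraph.WeakImmersion (Multigraph.completeMG t) G :=
  weakImmersion_clique_of_edgeConnected_general G t X hX hconn
end

section
/- Suppose G = G₁ ⊕̂_k G₂ for some k ≥ 0 and that G_i has a tree-cut decomposition (T_i, X_i) for i = 1,2. Then G has a tree-cut decomposition (T, Y) whose adhesion equals max{k, adhesion(T₁,X₁), adhesion(T₂,X₂)}. -/
open scoped Classical

/-!
Join `T₁` and `T₂` by an edge between the node `t₁` whose bag contains `v₁` and the node `t₂`
whose bag contains `v₂`, and give every node its old bag with `vᵢ` removed. Contracting the
`G₂`-side of `G` to a single vertex gives back `G₁`, with `v₁` as the contracted vertex; a tree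
edge inside `T₁` puts the whole `G₂`-side on the side of `v₁`, so its edge cut in `G` is, edge
for edge, its edge cut in `G₁`, and symmetrically for `T₂`. The new edge `t₁t₂` cuts off exactly
the `G₂`-side, whose edge cut consists of the `k` edges of the sum. So the cut sizes of the new
decomposition are `k` together with those of the two given ones.
-/

namespace Multigraph

variable {V E W F : Type*}

lemma Inc.sym2_otherEnd {G : Multigraph V E} {e : E} {v : V} (h : G.Inc e v) :
    s(G.otherEnd v e, v) = s(G.src e, G.tgt e) := by
  unfold otherEnd
  split_ifs with hs
  · rw [hs, Sym2.eq_swap]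
  · rw [h.resolve_left hs]

lemma cutEdges_compl (G : Multigraph V E) (S : Set V) : G.cutEdges Sᶜ = G.cutEdges S := by
  ext e
  simp only [cutEdges, Set.mem_ofPred_eq, Set.mem_compl_iff]
  tauto

lemma ncard_cutEdges_singleton_eq_degree [Finite E] (G : Multigraph V E) {v : V}
    (hloop : ∀ e, ¬ (G.src e = v ∧ G.tgt e = v)) : (G.cutEdges {v}).ncard = G.degree v := by
  have hcut : G.cutEdges {v} = {e | G.src e = v} ∪ {e | G.tgt e = v} := by
    ext e
    simp only [cutEdges, Set.mem_ofPred_eq, Set.mem_singleton_iff, Set.mem_union]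
    have := hloop e
    tauto
  rw [hcut, Set.ncard_union_eq ?_, degree]
  exact Set.disjoint_left.mpr fun e hs ht => hloop e ⟨hs, ht⟩

/-- `H` arises from `G` by identifying vertices along `g` and deleting the loops this creates;
`h` identifies the edges of `H` with the surviving edges of `G`. -/
lemma ncard_cutEdges_preimage {G : Multigraph V E} {H : Multigraph W F} (g : V → W) (h : F → E)
    (hinj : Function.Injective h)
    (hends : ∀ f, Sym2.map g s(G.src (h f), G.tgt (h f)) = s(H.src f, H.tgt f))
    (hloop : ∀ e, e ∉ Set.range h → g (G.src e) = g (G.tgt e)) (S : Set W) :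
    (G.cutEdges (g ⁻¹' S)).ncard = (H.cutEdges S).ncard := by
  have hmem : ∀ f, h f ∈ G.cutEdges (g ⁻¹' S) ↔ f ∈ H.cutEdges S := by
    intro f
    have := hends f
    rw [Sym2.map_mk, Sym2.eq_iff] at this
    simp only [cutEdges, Set.mem_ofPred_eq, Set.mem_preimage]
    rcases this with ⟨h1, h2⟩ | ⟨h1, h2⟩
    · rw [h1, h2]
    · rw [h1, h2]; tauto
  have himage : G.cutEdges (g ⁻¹' S) = h '' H.cutEdges S := by
    ext e
    by_cases he : e ∈ Set.range h
    · obtain ⟨f, rfl⟩ := he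
      rw [hmem, hinj.mem_set_image]
    · have hnot : e ∉ h '' H.cutEdges S := fun ⟨f, _, hf⟩ => he ⟨f, hf⟩
      simp only [cutEdges, Set.mem_ofPred_eq, Set.mem_preimage, hloop e he]
      tauto
  rw [himage, Set.ncard_image_of_injective _ hinj]

end Multigraph

namespace SimpleGraph

variable {α β : Type*}

lemma Reachable.map_of_adj {G : SimpleGraph α} {H : SimpleGraph β} (f : α → β)
    (hf : ∀ ⦃a b⦄, G.Adj a b → H.Reachable (f a) (f b)) {a b : α} (h : G.Reachable a b) :
    H.Reachable (f a) (f b) := by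
  rw [reachable_iff_reflTransGen] at h ⊢
  exact h.lift' f fun a b hab => (reachable_iff_reflTransGen _ _).mp (hf hab)

def bridgeSum (T₁ : SimpleGraph α) (T₂ : SimpleGraph β) (t₁ : α) (t₂ : β) :
    SimpleGraph (α ⊕ β) where
  Adj
    | .inl a, .inl b => T₁.Adj a b
    | .inr a, .inr b => T₂.Adj a b
    | .inl a, .inr b => a = t₁ ∧ b = t₂
    | .inr a, .inl b => a = t₂ ∧ b = t₁
  symm := by
    constructor
    rintro (a | a) (b | b) h
    · exact h.symm
    · exact ⟨h.2, h.1⟩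
    · exact ⟨h.2, h.1⟩
    · exact h.symm
  loopless := by
    constructor
    rintro (a | a) h
    · exact T₁.loopless.irrefl a h
    · exact T₂.loopless.irrefl a h

variable {T₁ : SimpleGraph α} {T₂ : SimpleGraph β} {t₁ : α} {t₂ : β}

lemma reachable_deleteEdges_bridgeSum_inl_iff (h₂ : T₂.Preconnected) {a b x : α} {n : α ⊕ β} :
    ((bridgeSum T₁ T₂ t₁ t₂).deleteEdges {s(.inl a, .inl b)}).Reachable (.inl x) n ↔
      (T₁.deleteEdges {s(a, b)}).Reachable x (Sum.elim id (fun _ => t₁) n) := by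
  constructor
  · refine Reachable.map_of_adj (Sum.elim id fun _ => t₁) ?_
    rintro (u | u) (v | v) huv <;> rw [deleteEdges_adj] at huv
    · exact Adj.reachable ((deleteEdges_adj ..).mpr ⟨huv.1, by simpa using huv.2⟩)
    · obtain ⟨⟨rfl, -⟩, -⟩ := huv; rfl
    · obtain ⟨⟨-, rfl⟩, -⟩ := huv; rfl
    · rfl
  · have hinl : ∀ {y z}, (T₁.deleteEdges {s(a, b)}).Reachable y z →
        ((bridgeSum T₁ T₂ t₁ t₂).deleteEdges {s(.inl a, .inl b)}).Reachable (.inl y) (.inl z) :=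
      fun h => h.map ⟨Sum.inl, fun huv => (deleteEdges_adj ..).mpr
        ⟨((deleteEdges_adj ..).mp huv).1, by simpa using ((deleteEdges_adj ..).mp huv).2⟩⟩
    rcases n with y | y <;> intro h
    · exact hinl h
    · have hbridge : ((bridgeSum T₁ T₂ t₁ t₂).deleteEdges {s(.inl a, .inl b)}).Adj
          (.inl t₁) (.inr t₂) := (deleteEdges_adj ..).mpr ⟨⟨rfl, rfl⟩, by simp⟩
      exact ((hinl (z := t₁) h).trans hbridge.reachable).trans
        ((h₂ t₂ y).map ⟨Sum.inr, fun huv => (deleteEdges_adj ..).mpr ⟨huv, by simp⟩⟩)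

lemma reachable_deleteEdges_bridgeSum_inr_iff (h₁ : T₁.Preconnected) {a b x : β} {n : α ⊕ β} :
    ((bridgeSum T₁ T₂ t₁ t₂).deleteEdges {s(.inr a, .inr b)}).Reachable (.inr x) n ↔
      (T₂.deleteEdges {s(a, b)}).Reachable x (Sum.elim (fun _ => t₂) id n) := by
  constructor
  · refine Reachable.map_of_adj (Sum.elim (fun _ => t₂) id) ?_
    rintro (u | u) (v | v) huv <;> rw [deleteEdges_adj] at huv
    · rfl
    · obtain ⟨⟨-, rfl⟩, -⟩ := huv; rfl
    · obtain ⟨⟨rfl, -⟩, -⟩ := huv; rfl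
    · exact Adj.reachable ((deleteEdges_adj ..).mpr ⟨huv.1, by simpa using huv.2⟩)
  · have hinr : ∀ {y z}, (T₂.deleteEdges {s(a, b)}).Reachable y z →
        ((bridgeSum T₁ T₂ t₁ t₂).deleteEdges {s(.inr a, .inr b)}).Reachable (.inr y) (.inr z) :=
      fun h => h.map ⟨Sum.inr, fun huv => (deleteEdges_adj ..).mpr
        ⟨((deleteEdges_adj ..).mp huv).1, by simpa using ((deleteEdges_adj ..).mp huv).2⟩⟩
    rcases n with y | y <;> intro h
    · have hbridge : ((bridgeSum T₁ T₂ t₁ t₂).deleteEdges {s(.inr a, .inr b)}).Adj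
          (.inr t₂) (.inl t₁) := (deleteEdges_adj ..).mpr ⟨⟨rfl, rfl⟩, by simp⟩
      exact ((hinr (z := t₂) h).trans hbridge.reachable).trans
        ((h₁ t₁ y).map ⟨Sum.inl, fun huv => (deleteEdges_adj ..).mpr ⟨huv, by simp⟩⟩)
    · exact hinr h

lemma reachable_deleteEdges_bridgeSum_bridge_iff (h₁ : T₁.Preconnected) (h₂ : T₂.Preconnected)
    {x y : α ⊕ β} :
    ((bridgeSum T₁ T₂ t₁ t₂).deleteEdges {s(.inl t₁, .inr t₂)}).Reachable x y ↔
      x.isLeft = y.isLeft := by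
  constructor
  · refine fun h => reachable_bot.mp (h.map_of_adj (H := ⊥) Sum.isLeft ?_)
    rintro (u | u) (v | v) huv <;> rw [deleteEdges_adj] at huv
    · rfl
    · obtain ⟨⟨rfl, rfl⟩, hne⟩ := huv; simp at hne
    · obtain ⟨⟨rfl, rfl⟩, hne⟩ := huv; simp [Sym2.eq_swap] at hne
    · rfl
  · rcases x with u | u <;> rcases y with v | v <;> intro h
    · exact (h₁ u v).map ⟨Sum.inl, fun huv => (deleteEdges_adj ..).mpr ⟨huv, by simp⟩⟩
    · exact absurd h (by simp)
    · exact absurd h (by simp)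
    · exact (h₂ u v).map ⟨Sum.inr, fun huv => (deleteEdges_adj ..).mpr ⟨huv, by simp⟩⟩

theorem isTree_bridgeSum (h₁ : T₁.IsTree) (h₂ : T₂.IsTree) : (bridgeSum T₁ T₂ t₁ t₂).IsTree := by
  have hp₁ := h₁.connected.preconnected
  have hp₂ := h₂.connected.preconnected
  refine ⟨?_, ?_⟩
  · have : Nonempty α := h₁.connected.nonempty
    have hfrom : ∀ x, (bridgeSum T₁ T₂ t₁ t₂).Reachable (.inl t₁) x := by
      rintro (a | b)
      · exact (hp₁ t₁ a).map ⟨Sum.inl, fun h => h⟩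
      · have hbridge : (bridgeSum T₁ T₂ t₁ t₂).Adj (.inl t₁) (.inr t₂) := ⟨rfl, rfl⟩
        exact hbridge.reachable.trans ((hp₂ t₂ b).map ⟨Sum.inr, fun h => h⟩)
    exact ⟨fun x y => (hfrom x).symm.trans (hfrom y)⟩
  · rw [isAcyclic_iff_forall_adj_isBridge]
    rintro (a | a) (b | b) hab <;> rw [isBridge_iff]
    · exact fun h => isAcyclic_iff_forall_adj_isBridge.mp h₁.isAcyclic hab
        ((reachable_deleteEdges_bridgeSum_inl_iff hp₂).mp h)
    · obtain ⟨rfl, rfl⟩ := hab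
      simp [reachable_deleteEdges_bridgeSum_bridge_iff hp₁ hp₂]
    · obtain ⟨rfl, rfl⟩ := hab
      simp [Sym2.eq_swap (a := Sum.inr _), reachable_deleteEdges_bridgeSum_bridge_iff hp₁ hp₂]
    · exact fun h => isAcyclic_iff_forall_adj_isBridge.mp h₂.isAcyclic hab
        ((reachable_deleteEdges_bridgeSum_inr_iff hp₁).mp h)

end SimpleGraph

namespace Multigraph.TreeCutDecomp

variable {V E W F τ τ' : Type*} {G : Multigraph V E} {H : Multigraph W F}

def cutSizes (D : TreeCutDecomp G τ) : Set ℕ :=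
  {n | ∃ u v, D.tree.Adj u v ∧ n = (D.edgeCut u v).ncard}

lemma bddAbove_cutSizes [Finite E] (D : TreeCutDecomp G τ) : BddAbove D.cutSizes :=
  ⟨Nat.card E, by rintro _ ⟨u, v, -, rfl⟩; exact Set.ncard_le_card _⟩

lemma eq_of_mem_bag (D : TreeCutDecomp G τ) {v : V} {s t : τ} (hs : v ∈ D.bag s)
    (ht : v ∈ D.bag t) : s = t :=
  by_contra fun hne => Set.disjoint_left.mp (D.bag_disj s t hne) hs ht

lemma sideVerts_eq_preimage (D : TreeCutDecomp G τ) (D' : TreeCutDecomp H τ') (g : V → W)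
    (c : τ → τ') (hbag : ∀ n, ∀ v ∈ D.bag n, g v ∈ D'.bag (c n)) {u w : τ} {u' w' : τ'}
    (hreach : ∀ n, (D.tree.deleteEdges {s(u, w)}).Reachable w n ↔
      (D'.tree.deleteEdges {s(u', w')}).Reachable w' (c n)) :
    D.sideVerts u w = g ⁻¹' D'.sideVerts u' w' := by
  ext v
  simp only [sideVerts, Set.mem_preimage, Set.mem_iUnion, exists_prop]
  constructor
  · rintro ⟨n, hn, hv⟩
    exact ⟨c n, (hreach n).mp hn, hbag n v hv⟩
  · rintro ⟨t, ht, hv⟩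
    obtain ⟨n, hn⟩ := D.exists_bag v
    obtain rfl := D'.eq_of_mem_bag (hbag n v hn) hv
    exact ⟨n, (hreach n).mpr ht, hn⟩

end Multigraph.TreeCutDecomp

namespace Multigraph.EdgeSumWitness

variable {V E V₁ E₁ V₂ E₂ : Type*} {G : Multigraph V E} {G₁ : Multigraph V₁ E₁}
  {G₂ : Multigraph V₂ E₂} {k : ℕ} (w : EdgeSumWitness G G₁ G₂ k)

/-- Contracting the `G₂`-side of `G` to `v₁` gives back `G₁`: this is that contraction on
vertices, and `edge₁` identifies the edges of `G₁` with the edges of `G` that survive it. -/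
def proj₁ (v : V) : V₁ := Sum.elim Subtype.val (fun _ => w.v₁) (w.φ v)

def proj₂ (v : V) : V₂ := Sum.elim (fun _ => w.v₂) Subtype.val (w.φ v)

@[simp] lemma proj₁_inl (x : {x : V₁ // x ≠ w.v₁}) : w.proj₁ (w.φ.symm (.inl x)) = x := by
  simp [proj₁]

@[simp] lemma proj₁_inr (y : {y : V₂ // y ≠ w.v₂}) : w.proj₁ (w.φ.symm (.inr y)) = w.v₁ := by
  simp [proj₁]

@[simp] lemma proj₂_inl (x : {x : V₁ // x ≠ w.v₁}) : w.proj₂ (w.φ.symm (.inl x)) = w.v₂ := by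
  simp [proj₂]

@[simp] lemma proj₂_inr (y : {y : V₂ // y ≠ w.v₂}) : w.proj₂ (w.φ.symm (.inr y)) = y := by
  simp [proj₂]

lemma proj₁_eq_iff (v : V) : w.proj₁ v = w.v₁ ↔ w.proj₂ v ≠ w.v₂ := by
  rcases hv : w.φ v with x | y
  · simp [proj₁, proj₂, hv, x.2]
  · simp [proj₁, proj₂, hv, y.2]

noncomputable def edge₁ (e : E₁) : E :=
  w.ψ.symm (if h : G₁.Inc e w.v₁ then .inr (.inr ⟨e, h⟩) else .inl ⟨e, h⟩)

noncomputable def edge₂ (e : E₂) : E :=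
  w.ψ.symm (if h : G₂.Inc e w.v₂ then .inr (.inr (w.π.symm ⟨e, h⟩)) else .inr (.inl ⟨e, h⟩))

lemma edge₁_injective : Function.Injective w.edge₁ := by
  intro e f h
  simp only [edge₁, w.ψ.symm.injective.eq_iff] at h
  split_ifs at h <;> simp_all

lemma edge₂_injective : Function.Injective w.edge₂ := by
  intro e f h
  simp only [edge₂, w.ψ.symm.injective.eq_iff] at h
  split_ifs at h <;> simp_all

lemma map_proj₁_edge₁ (e : E₁) :
    Sym2.map w.proj₁ s(G.src (w.edge₁ e), G.tgt (w.edge₁ e)) = s(G₁.src e, G₁.tgt e) := by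
  by_cases h : G₁.Inc e w.v₁
  · rw [w.ends_cross _ ⟨e, h⟩ (by simp [edge₁, h]), Sym2.map_mk, proj₁_inl, proj₁_inr,
      h.sym2_otherEnd]
  · rw [w.ends₁ _ ⟨e, h⟩ (by simp [edge₁, h]), Sym2.map_mk, proj₁_inl, proj₁_inl]

lemma map_proj₂_edge₂ (e : E₂) :
    Sym2.map w.proj₂ s(G.src (w.edge₂ e), G.tgt (w.edge₂ e)) = s(G₂.src e, G₂.tgt e) := by
  by_cases h : G₂.Inc e w.v₂
  · rw [w.ends_cross _ (w.π.symm ⟨e, h⟩) (by simp [edge₂, h]), Sym2.map_mk, proj₂_inl,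
      proj₂_inr, Sym2.eq_swap]
    simpa using h.sym2_otherEnd
  · rw [w.ends₂ _ ⟨e, h⟩ (by simp [edge₂, h]), Sym2.map_mk, proj₂_inr, proj₂_inr]

lemma proj₁_src_eq_proj₁_tgt {e : E} (he : e ∉ Set.range w.edge₁) :
    w.proj₁ (G.src e) = w.proj₁ (G.tgt e) := by
  rcases hψ : w.ψ e with e₁ | e₂ | e₁
  · exact absurd ⟨e₁.1, by rw [edge₁, dif_neg e₁.2, Equiv.symm_apply_eq, hψ]⟩ he
  · have hends := congrArg (Sym2.map w.proj₁) (w.ends₂ e e₂ hψ)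
    simp only [Sym2.map_mk, proj₁_inr, Sym2.eq_iff, or_self] at hends
    rw [hends.1, hends.2]
  · exact absurd ⟨e₁.1, by rw [edge₁, dif_pos e₁.2, Equiv.symm_apply_eq, hψ]⟩ he

lemma proj₂_src_eq_proj₂_tgt {e : E} (he : e ∉ Set.range w.edge₂) :
    w.proj₂ (G.src e) = w.proj₂ (G.tgt e) := by
  rcases hψ : w.ψ e with e₁ | e₂ | e₁
  · have hends := congrArg (Sym2.map w.proj₂) (w.ends₁ e e₁ hψ)
    simp only [Sym2.map_mk, proj₂_inl, Sym2.eq_iff, or_self] at hends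
    rw [hends.1, hends.2]
  · exact absurd ⟨e₂.1, by rw [edge₂, dif_neg e₂.2, Equiv.symm_apply_eq, hψ]⟩ he
  · exact absurd ⟨(w.π e₁).1, by
      rw [edge₂, dif_pos (w.π e₁).2, Equiv.symm_apply_eq, hψ, Subtype.coe_eta,
        Equiv.symm_apply_apply]⟩ he

lemma ncard_cutEdges_preimage_proj₁ (S : Set V₁) :
    (G.cutEdges (w.proj₁ ⁻¹' S)).ncard = (G₁.cutEdges S).ncard :=
  ncard_cutEdges_preimage _ _ w.edge₁_injective w.map_proj₁_edge₁
    (fun _ => w.proj₁_src_eq_proj₁_tgt) S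

lemma ncard_cutEdges_preimage_proj₂ (S : Set V₂) :
    (G.cutEdges (w.proj₂ ⁻¹' S)).ncard = (G₂.cutEdges S).ncard :=
  ncard_cutEdges_preimage _ _ w.edge₂_injective w.map_proj₂_edge₂
    (fun _ => w.proj₂_src_eq_proj₂_tgt) S

open TreeCutDecomp SimpleGraph

variable {τ₁ τ₂ : Type*} (D₁ : TreeCutDecomp G₁ τ₁) (D₂ : TreeCutDecomp G₂ τ₂)

noncomputable def treeCutDecomp : TreeCutDecomp G (τ₁ ⊕ τ₂) where
  tree := bridgeSum D₁.tree D₂.tree (D₁.nodeOf w.v₁) (D₂.nodeOf w.v₂)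
  tree_isTree := isTree_bridgeSum D₁.tree_isTree D₂.tree_isTree
  bag := Sum.elim (fun t => w.proj₁ ⁻¹' (D₁.bag t \ {w.v₁}))
    (fun t => w.proj₂ ⁻¹' (D₂.bag t \ {w.v₂}))
  bag_disj := by
    rintro (i | i) (j | j) hij
    · exact ((D₁.bag_disj i j (by simpa using hij)).mono Set.sdiff_subset
        Set.sdiff_subset).preimage _
    · exact Set.disjoint_left.mpr fun v h₁ h₂ => h₁.2 ((w.proj₁_eq_iff v).mpr h₂.2)
    · exact Set.disjoint_left.mpr fun v h₂ h₁ => h₁.2 ((w.proj₁_eq_iff v).mpr h₂.2)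
    · exact ((D₂.bag_disj i j (by simpa using hij)).mono Set.sdiff_subset
        Set.sdiff_subset).preimage _
  bag_union := by
    refine Set.eq_univ_of_forall fun v => Set.mem_iUnion.mpr ?_
    by_cases hv : w.proj₁ v = w.v₁
    · exact ⟨.inr (D₂.nodeOf (w.proj₂ v)), D₂.nodeOf_mem _, (w.proj₁_eq_iff v).mp hv⟩
    · exact ⟨.inl (D₁.nodeOf (w.proj₁ v)), D₁.nodeOf_mem _, hv⟩

lemma proj₁_mem_bag : ∀ n, ∀ v ∈ (w.treeCutDecomp D₁ D₂).bag n,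
    w.proj₁ v ∈ D₁.bag (Sum.elim id (fun _ => D₁.nodeOf w.v₁) n)
  | .inl _, _, hv => hv.1
  | .inr _, v, hv => (w.proj₁_eq_iff v).mpr hv.2 ▸ D₁.nodeOf_mem w.v₁

lemma proj₂_mem_bag : ∀ n, ∀ v ∈ (w.treeCutDecomp D₁ D₂).bag n,
    w.proj₂ v ∈ D₂.bag (Sum.elim (fun _ => D₂.nodeOf w.v₂) id n)
  | .inl _, v, hv => (w.proj₁_eq_iff v).not_left.mp hv.2 ▸ D₂.nodeOf_mem w.v₂
  | .inr _, _, hv => hv.1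

lemma ncard_edgeCut_inl (a b : τ₁) :
    ((w.treeCutDecomp D₁ D₂).edgeCut (.inl a) (.inl b)).ncard = (D₁.edgeCut a b).ncard := by
  rw [edgeCut, sideVerts_eq_preimage _ D₁ _ _ (w.proj₁_mem_bag D₁ D₂)
    (fun _ => reachable_deleteEdges_bridgeSum_inl_iff D₂.tree_isTree.connected.preconnected),
    ncard_cutEdges_preimage_proj₁, edgeCut]

lemma ncard_edgeCut_inr (a b : τ₂) :
    ((w.treeCutDecomp D₁ D₂).edgeCut (.inr a) (.inr b)).ncard = (D₂.edgeCut a b).ncard := by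
  rw [edgeCut, sideVerts_eq_preimage _ D₂ _ _ (w.proj₂_mem_bag D₁ D₂)
    (fun _ => reachable_deleteEdges_bridgeSum_inr_iff D₁.tree_isTree.connected.preconnected),
    ncard_cutEdges_preimage_proj₂, edgeCut]

lemma sideVerts_bridge :
    (w.treeCutDecomp D₁ D₂).sideVerts (.inl (D₁.nodeOf w.v₁)) (.inr (D₂.nodeOf w.v₂)) =
      w.proj₂ ⁻¹' {w.v₂}ᶜ := by
  ext v
  simp only [sideVerts, treeCutDecomp, Set.mem_iUnion, exists_prop, Sum.exists,
    reachable_deleteEdges_bridgeSum_bridge_iff D₁.tree_isTree.connected.preconnected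
      D₂.tree_isTree.connected.preconnected, Sum.isLeft_inl, Sum.isLeft_inr, Sum.elim_inl,
    Sum.elim_inr, Bool.false_eq_true, false_and, exists_false, true_and, false_or,
    Set.mem_preimage, Set.mem_sdiff, Set.mem_compl_iff]
  exact ⟨fun ⟨_, _, h⟩ => h, fun h => ⟨_, D₂.nodeOf_mem _, h⟩⟩

lemma sideVerts_bridge_symm :
    (w.treeCutDecomp D₁ D₂).sideVerts (.inr (D₂.nodeOf w.v₂)) (.inl (D₁.nodeOf w.v₁)) =
      w.proj₁ ⁻¹' {w.v₁}ᶜ := by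
  ext v
  simp only [sideVerts, treeCutDecomp, Sym2.eq_swap (a := Sum.inr _), Set.mem_iUnion,
    exists_prop, Sum.exists, reachable_deleteEdges_bridgeSum_bridge_iff
      D₁.tree_isTree.connected.preconnected D₂.tree_isTree.connected.preconnected,
    Sum.isLeft_inl, Sum.isLeft_inr, Sum.elim_inl, Sum.elim_inr, Bool.true_eq_false, false_and,
    exists_false, true_and, or_false, Set.mem_preimage, Set.mem_sdiff, Set.mem_compl_iff]
  exact ⟨fun ⟨_, _, h⟩ => h, fun h => ⟨_, D₁.nodeOf_mem _, h⟩⟩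

lemma ncard_edgeCut_bridge [Finite E] :
    ((w.treeCutDecomp D₁ D₂).edgeCut (.inl (D₁.nodeOf w.v₁)) (.inr (D₂.nodeOf w.v₂))).ncard =
      k := by
  have : Finite E₂ := .of_injective _ w.edge₂_injective
  rw [edgeCut, sideVerts_bridge, ncard_cutEdges_preimage_proj₂, cutEdges_compl,
    ncard_cutEdges_singleton_eq_degree _ w.noloop₂, w.deg₂]

lemma ncard_edgeCut_bridge_symm [Finite E] :
    ((w.treeCutDecomp D₁ D₂).edgeCut (.inr (D₂.nodeOf w.v₂)) (.inl (D₁.nodeOf w.v₁))).ncard =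
      k := by
  have : Finite E₁ := .of_injective _ w.edge₁_injective
  rw [edgeCut, sideVerts_bridge_symm, ncard_cutEdges_preimage_proj₁, cutEdges_compl,
    ncard_cutEdges_singleton_eq_degree _ w.noloop₁, w.deg₁]

lemma cutSizes_treeCutDecomp [Finite E] :
    (w.treeCutDecomp D₁ D₂).cutSizes = insert k (D₁.cutSizes ∪ D₂.cutSizes) := by
  ext n
  constructor
  · rintro ⟨a | a, b | b, hab, rfl⟩
    · exact .inr (.inl ⟨a, b, hab, w.ncard_edgeCut_inl D₁ D₂ a b⟩)
    · obtain ⟨rfl, rfl⟩ := hab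
      exact .inl (w.ncard_edgeCut_bridge D₁ D₂)
    · obtain ⟨rfl, rfl⟩ := hab
      exact .inl (w.ncard_edgeCut_bridge_symm D₁ D₂)
    · exact .inr (.inr ⟨a, b, hab, w.ncard_edgeCut_inr D₁ D₂ a b⟩)
  · rintro (rfl | ⟨a, b, hab, rfl⟩ | ⟨a, b, hab, rfl⟩)
    · exact ⟨.inl (D₁.nodeOf w.v₁), .inr (D₂.nodeOf w.v₂), ⟨rfl, rfl⟩,
        (w.ncard_edgeCut_bridge D₁ D₂).symm⟩
    · exact ⟨.inl a, .inl b, hab, (w.ncard_edgeCut_inl D₁ D₂ a b).symm⟩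
    · exact ⟨.inr a, .inr b, hab, (w.ncard_edgeCut_inr D₁ D₂ a b).symm⟩

end Multigraph.EdgeSumWitness

theorem treeCutDecomp_of_edgeSum_general {V E V₁ E₁ V₂ E₂ : Type*} {τ₁ τ₂ : Type*}
    [Fintype E]
    (G : Multigraph V E) (G₁ : Multigraph V₁ E₁) (G₂ : Multigraph V₂ E₂) (k : ℕ)
    (hsum : Multigraph.IsEdgeSum G G₁ G₂ k)
    (D₁ : Multigraph.TreeCutDecomp G₁ τ₁) (D₂ : Multigraph.TreeCutDecomp G₂ τ₂) :
    ∃ D : Multigraph.TreeCutDecomp G (τ₁ ⊕ τ₂),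
      D.adhesion = max k (max D₁.adhesion D₂.adhesion) := by
  obtain ⟨w⟩ := hsum
  refine ⟨w.treeCutDecomp D₁ D₂, ?_⟩
  have hbdd := (w.treeCutDecomp D₁ D₂).bddAbove_cutSizes
  rw [w.cutSizes_treeCutDecomp, bddAbove_insert] at hbdd
  show sSup (w.treeCutDecomp D₁ D₂).cutSizes =
    max k (max (sSup D₁.cutSizes) (sSup D₂.cutSizes))
  rw [w.cutSizes_treeCutDecomp, csSup_insert' hbdd,
    csSup_union' (hbdd.mono Set.subset_union_left) (hbdd.mono Set.subset_union_right)]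

/-- if `G = G₁ ⊕̂_k G₂` and each `Gᵢ` has a tree-cut decomposition, then `G`
has a tree-cut decomposition whose adhesion is the maximum of `k` and the two adhesions. -/
theorem treeCutDecomp_of_edgeSum {V E V₁ E₁ V₂ E₂ : Type*} {τ₁ τ₂ : Type*}
    [Fintype E] [Fintype E₁] [Fintype E₂] [Fintype τ₁] [Fintype τ₂]
    (G : Multigraph V E) (G₁ : Multigraph V₁ E₁) (G₂ : Multigraph V₂ E₂) (k : ℕ)
    (hsum : Multigraph.IsEdgeSum G G₁ G₂ k)
    (D₁ : Multigraph.TreeCutDecomp G₁ τ₁) (D₂ : Multigraph.TreeCutDecomp G₂ τ₂) :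
    ∃ D : Multigraph.TreeCutDecomp G (τ₁ ⊕ τ₂),
      D.adhesion = max k (max D₁.adhesion D₂.adhesion) :=
  treeCutDecomp_of_edgeSum_general G G₁ G₂ k hsum D₁ D₂
end

section
/- If a simple connected graph G does not contain K_{1,k} as a minor, then G has a set X of at most 4k vertices such that G−X is a vertex-disjoint union of paths. -/
open scoped Classical

/-- A simple graph is a vertex-disjoint union of (possibly trivial) paths. -/
def SimpleGraph.IsLinearForest {α : Type*} (H : SimpleGraph α) : Prop :=
  H.IsAcyclic ∧ ∀ v : α, (H.neighborSet v).ncard ≤ 2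

/-!
Let `D` be the set of vertices of degree at least 3. Deleting `D` and one further vertex `r`
leaves a linear forest: the remaining degrees are at most 2, and in a connected graph a cycle
through vertices of degree at most 2 contains every vertex, in particular `r`.

To bound `|D|`, grow a connected set `C` one vertex of its outer boundary `∂C` at a time, as in a
search for a spanning tree with many leaves. A boundary vertex weighs 2 while it has a neighbour
outside `C ∪ ∂C` and 3 afterwards; the potential is the weight of `∂C` minus `|C ∩ D|`.
Expanding a vertex with two outside neighbours raises it. Along a chain of vertices with a single
outside neighbour it may drop by one at a vertex of `D`, which `tipPotential` charges in advance:
while every other boundary vertex has at most one outside neighbour (`IsTip`), a chain vertex in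
`D` either has two outside neighbours or is adjacent to another boundary vertex, which then loses
its last outside neighbour. When `C ∪ ∂C` is everything, `|D| ≤ 4 |∂C| + 1`; and `C` together
with the vertices of `∂C` is a `K_{1,|∂C|}` minor, so `|∂C| < k`.
-/

open Finset

namespace SimpleGraph

section

variable {V : Type*} {G : SimpleGraph V} {a : V}

lemma induce_insert_connected_of_adj {s : Set V} {u : V} (hs : (G.induce s).Connected)
    (hu : u ∈ s) (hua : G.Adj u a) : (G.induce (insert a s)).Connected := by
  have := induce_union_connected (G.induce_pair_connected_of_adj hua).preconnected
    hs.preconnected ⟨u, by simp, hu⟩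
  rwa [Set.insert_union, Set.singleton_union, Set.insert_eq_of_mem (Set.mem_insert_of_mem _ hu)]
    at this

lemma induce_singleton_connected (v : V) : (G.induce {v}).Connected := by
  rw [induce_singleton_eq_top]
  exact connected_top

end

noncomputable section

variable {V : Type*} [Fintype V] (G : SimpleGraph V)

def branchVertices : Finset V := {v | 3 ≤ G.degree v}

def outerBoundary (C : Finset V) : Finset V := C.biUnion (G.neighborFinset ·) \ C

def closedNbhd (C : Finset V) : Finset V := C ∪ C.biUnion (G.neighborFinset ·)

def outsideNbrs (C : Finset V) (v : V) : Finset V := G.neighborFinset v \ G.closedNbhd C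

variable {G} {C C' : Finset V} {a v : V}

lemma mem_branchVertices : v ∈ G.branchVertices ↔ 3 ≤ G.degree v := by
  simp [branchVertices]

lemma mem_outerBoundary : v ∈ G.outerBoundary C ↔ v ∉ C ∧ ∃ u ∈ C, G.Adj u v := by
  simp [outerBoundary, and_comm]

lemma closedNbhd_eq_union_outerBoundary : G.closedNbhd C = C ∪ G.outerBoundary C := by
  simp [closedNbhd, outerBoundary]

lemma closedNbhd_mono (h : C ⊆ C') : G.closedNbhd C ⊆ G.closedNbhd C' :=
  union_subset_union h (biUnion_subset_biUnion_of_subset_left _ h)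

lemma outsideNbrs_anti (h : C ⊆ C') : G.outsideNbrs C' v ⊆ G.outsideNbrs C v :=
  sdiff_subset_sdiff subset_rfl (closedNbhd_mono h)

lemma outsideNbrs_eq_empty_of_mem (hv : v ∈ C) : G.outsideNbrs C v = ∅ :=
  sdiff_eq_empty_iff_subset.2
    (subset_union_right.trans' (subset_biUnion_of_mem (G.neighborFinset ·) hv))

lemma closedNbhd_insert (ha : a ∈ G.outerBoundary C) :
    G.closedNbhd (insert a C) = G.closedNbhd C ∪ G.outsideNbrs C a := by
  have haN : a ∈ G.closedNbhd C := by
    rw [closedNbhd_eq_union_outerBoundary]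
    exact mem_union_right _ ha
  ext v
  by_cases hva : v = a
  · subst hva
    exact iff_of_true (mem_union_left _ (mem_insert_self _ _)) (mem_union_left _ haN)
  · simp only [closedNbhd, outsideNbrs, biUnion_insert, mem_union, mem_insert, mem_sdiff, hva]
    tauto

lemma outerBoundary_insert (ha : a ∈ G.outerBoundary C) :
    G.outerBoundary (insert a C) = (G.outerBoundary C).erase a ∪ G.outsideNbrs C a := by
  have h := closedNbhd_insert ha
  simp only [closedNbhd_eq_union_outerBoundary] at h
  have ha' : a ∉ C := (mem_outerBoundary.1 ha).1
  ext v
  have hv := congrArg (v ∈ ·) h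
  simp only [eq_iff_iff, mem_union, mem_insert, outsideNbrs, closedNbhd_eq_union_outerBoundary,
    mem_sdiff, mem_erase] at hv ⊢
  by_cases hva : v = a
  · subst hva
    simp [outerBoundary, ha']
  · have : v ∈ G.outerBoundary (insert a C) → v ∉ C := fun h' => by
      simp [outerBoundary] at h'
      tauto
    have : v ∈ G.outerBoundary C → v ∉ C := fun h' => (mem_outerBoundary.1 h').1
    tauto

lemma outsideNbrs_insert (ha : a ∈ G.outerBoundary C) (v : V) :
    G.outsideNbrs (insert a C) v = G.outsideNbrs C v \ G.outsideNbrs C a := by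
  ext w
  simp only [outsideNbrs, closedNbhd_insert ha, mem_sdiff, mem_union]
  tauto

lemma exists_outsideNbrs_nonempty (hG : G.Preconnected) (hC : C.Nonempty)
    (h : G.closedNbhd C ≠ univ) : ∃ v ∈ G.outerBoundary C, (G.outsideNbrs C v).Nonempty := by
  obtain ⟨r, hr⟩ := hC
  obtain ⟨w, hw⟩ : ∃ w, w ∉ G.closedNbhd C := by
    by_contra! hw
    exact h (eq_univ_iff_forall.2 hw)
  obtain ⟨d, -, hd₁, hd₂⟩ :=
    (hG r w).some.exists_boundary_dart (G.closedNbhd C) (mem_union_left _ hr) hw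
  have hout : d.snd ∈ G.outsideNbrs C d.fst := by
    simpa [outsideNbrs] using And.intro d.adj hd₂
  refine ⟨d.fst, ?_, d.snd, hout⟩
  rw [closedNbhd_eq_union_outerBoundary] at hd₁
  refine (mem_union.1 hd₁).resolve_left fun hC => ?_
  simp [outsideNbrs_eq_empty_of_mem hC] at hout

theorem hasStarMinor_of_le_card_outerBoundary {k : ℕ} (hC : (G.induce (C : Set V)).Connected)
    (hk : k ≤ #(G.outerBoundary C)) : G.HasStarMinor k := by
  obtain ⟨f⟩ : Nonempty (Fin k ↪ G.outerBoundary C) :=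
    Function.Embedding.nonempty_of_card_le (by simpa using hk)
  have hf (i : Fin k) := mem_outerBoundary.1 (f i).2
  have hCf (i : Fin k) : Disjoint (C : Set V) {(f i : V)} :=
    Set.disjoint_singleton_right.2 (hf i).1
  refine ⟨Fin.cons (C : Set V) fun i => {(f i : V)}, fun i => ?_, fun i => ?_, fun i j hij => ?_,
    fun i hi => ?_⟩
  · cases i using Fin.cases
    · exact Set.nonempty_coe_sort.1 hC.nonempty
    · exact Set.singleton_nonempty _
  · cases i using Fin.cases
    · exact hC
    · exact induce_singleton_connected _
  · cases i using Fin.cases <;> cases j using Fin.cases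
    · exact absurd rfl hij
    · exact hCf _
    · exact (hCf _).symm
    · exact Set.disjoint_singleton.2 fun h =>
        hij (congrArg Fin.succ (f.injective (Subtype.ext h)))
  · cases i using Fin.cases
    · exact absurd rfl hi
    · obtain ⟨u, hu, hua⟩ := (hf _).2
      exact ⟨u, hu, f _, rfl, hua⟩

variable (G) in
def leafWeight (C : Finset V) (v : V) : ℤ := if (G.outsideNbrs C v).Nonempty then 2 else 3

variable (G) in
def leafPotential (C : Finset V) : ℤ :=
  ∑ v ∈ G.outerBoundary C, G.leafWeight C v - #(C ∩ G.branchVertices)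

variable (G) in
def tipPotential (C : Finset V) (a : V) : ℤ :=
  G.leafPotential C - (if a ∈ G.branchVertices then 1 else 0) +
    (if 2 ≤ #(G.outsideNbrs C a) then 1 else 0)

variable (G) in
def IsTip (C : Finset V) (a : V) : Prop :=
  a ∈ G.outerBoundary C ∧ (G.outsideNbrs C a).Nonempty ∧
    (#(G.outsideNbrs C a) = 1 → ∀ b ∈ G.outerBoundary C, b ≠ a → #(G.outsideNbrs C b) ≤ 1)

variable (G) in
def HasLeafySet (b : ℤ) : Prop :=
  ∃ C : Finset V, (G.induce (C : Set V)).Connected ∧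
    b + #G.branchVertices ≤ 4 * #(G.outerBoundary C)

lemma two_le_leafWeight : 2 ≤ G.leafWeight C v := by
  unfold leafWeight
  split_ifs <;> norm_num

lemma leafWeight_mono (h : C ⊆ C') : G.leafWeight C v ≤ G.leafWeight C' v := by
  unfold leafWeight
  by_cases h' : (G.outsideNbrs C' v).Nonempty
  · rw [if_pos h', if_pos (h'.mono (outsideNbrs_anti h))]
  · rw [if_neg h']
    split_ifs <;> norm_num

lemma sum_leafWeight_insert_sub_nonneg :
    0 ≤ ∑ v ∈ (G.outerBoundary C).erase a, (G.leafWeight (insert a C) v - G.leafWeight C v) :=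
  sum_nonneg fun _ _ => sub_nonneg.2 (leafWeight_mono (subset_insert a C))

lemma leafPotential_insert (ha : a ∈ G.outerBoundary C) (hlive : (G.outsideNbrs C a).Nonempty) :
    G.leafPotential (insert a C) =
      G.leafPotential C - 2 - (if a ∈ G.branchVertices then 1 else 0) +
      ∑ v ∈ (G.outerBoundary C).erase a, (G.leafWeight (insert a C) v - G.leafWeight C v) +
      ∑ x ∈ G.outsideNbrs C a, G.leafWeight (insert a C) x := by
  have hdisj : Disjoint ((G.outerBoundary C).erase a) (G.outsideNbrs C a) := by
    refine Finset.disjoint_left.2 fun v hv hv' => (mem_sdiff.1 hv').2 ?_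
    rw [closedNbhd_eq_union_outerBoundary]
    exact mem_union_right _ (mem_of_mem_erase hv)
  have hsplit := add_sum_erase (G.outerBoundary C) (G.leafWeight C) ha
  have hwa : G.leafWeight C a = 2 := if_pos hlive
  have hcard : #(insert a C ∩ G.branchVertices) =
      #(C ∩ G.branchVertices) + if a ∈ G.branchVertices then 1 else 0 := by
    have haC : a ∉ C ∩ G.branchVertices := fun h => (mem_outerBoundary.1 ha).1 (mem_inter.1 h).1
    split_ifs with hD
    · rw [insert_inter_of_mem hD, card_insert_of_notMem haC]
    · rw [insert_inter_of_notMem hD, add_zero]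
  unfold leafPotential
  rw [outerBoundary_insert ha, sum_union hdisj, hcard, sum_sub_distrib, ← hsplit, hwa]
  push_cast
  ring

lemma tipPotential_lt_leafPotential_insert_of_two_le (ha : a ∈ G.outerBoundary C)
    (h₂ : 2 ≤ #(G.outsideNbrs C a)) : G.tipPotential C a < G.leafPotential (insert a C) := by
  have hsum : (#(G.outsideNbrs C a) : ℤ) * 2 ≤
      ∑ x ∈ G.outsideNbrs C a, G.leafWeight (insert a C) x := by
    simpa using card_nsmul_le_sum (G.outsideNbrs C a) (G.leafWeight (insert a C)) 2
      fun x _ => two_le_leafWeight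
  have := sum_leafWeight_insert_sub_nonneg (G := G) (C := C) (a := a)
  rw [leafPotential_insert ha (card_pos.1 (by omega))]
  unfold tipPotential
  split_ifs <;> omega

lemma tipPotential_lt_leafPotential_insert_of_dead {x : V} (ha : a ∈ G.outerBoundary C)
    (hx : G.outsideNbrs C a = {x}) (hdead : G.outsideNbrs (insert a C) x = ∅) :
    G.tipPotential C a < G.leafPotential (insert a C) := by
  have hw : G.leafWeight (insert a C) x = 3 := by simp [leafWeight, hdead]
  have := sum_leafWeight_insert_sub_nonneg (G := G) (C := C) (a := a)
  rw [leafPotential_insert ha (by simp [hx]), hx, sum_singleton]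
  unfold tipPotential
  rw [hx, card_singleton]
  split_ifs <;> omega

lemma degree_le_of_outsideNbrs_eq_singleton {x : V} (ha : a ∈ G.outerBoundary C)
    (hx : G.outsideNbrs C a = {x}) :
    G.degree x ≤ 1 + #(((G.outerBoundary C).erase a).filter (G.Adj x ·)) +
      #(G.outsideNbrs (insert a C) x) := by
  have hxN : x ∉ G.closedNbhd C := (mem_sdiff.1 (hx ▸ mem_singleton_self x)).2
  have hcover : G.neighborFinset x ⊆
      insert a (((G.outerBoundary C).erase a).filter (G.Adj x ·)) ∪
        G.outsideNbrs (insert a C) x := by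
    intro y hy
    rw [mem_neighborFinset] at hy
    by_cases hyN : y ∈ G.closedNbhd (insert a C)
    · rw [closedNbhd_insert ha, hx, mem_union, mem_singleton, closedNbhd_eq_union_outerBoundary,
        mem_union] at hyN
      rcases hyN with (hyC | hyB) | rfl
      · exact absurd (mem_union_right _ (mem_biUnion.2 ⟨y, hyC, by simpa using hy.symm⟩)) hxN
      · by_cases hya : y = a
        · simp [hya]
        · simp [hya, hyB, hy]
      · exact (G.irrefl hy).elim
    · exact mem_union_right _ (by simp [outsideNbrs, hy, hyN])
  calc G.degree x = #(G.neighborFinset x) := (card_neighborFinset_eq_degree G x).symm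
    _ ≤ _ := (card_le_card hcover).trans (card_union_le _ _)
    _ ≤ _ := by grw [card_insert_le]; omega

lemma card_le_sum_leafWeight_insert_sub {x : V} (ha : G.IsTip C a)
    (hx : G.outsideNbrs C a = {x}) :
    (#(((G.outerBoundary C).erase a).filter (G.Adj x ·)) : ℤ) ≤
      ∑ v ∈ (G.outerBoundary C).erase a, (G.leafWeight (insert a C) v - G.leafWeight C v) := by
  have hxN : x ∉ G.closedNbhd C := (mem_sdiff.1 (hx ▸ mem_singleton_self x)).2
  have hdies : ∀ b ∈ ((G.outerBoundary C).erase a).filter (G.Adj x ·),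
      G.leafWeight (insert a C) b - G.leafWeight C b = 1 := by
    intro b hb
    obtain ⟨hb, hxb⟩ := mem_filter.1 hb
    have hxb' : x ∈ G.outsideNbrs C b := by simp [outsideNbrs, hxb.symm, hxN]
    have hbx : G.outsideNbrs C b = {x} := eq_singleton_iff_unique_mem.2 ⟨hxb', fun y hy =>
      card_le_one.1 (ha.2.2 (by simp [hx]) b (mem_of_mem_erase hb) (ne_of_mem_erase hb))
        y hy x hxb'⟩
    simp [leafWeight, outsideNbrs_insert ha.1, hbx, hx]
  calc (#(((G.outerBoundary C).erase a).filter (G.Adj x ·)) : ℤ)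
      = ∑ b ∈ ((G.outerBoundary C).erase a).filter (G.Adj x ·),
          (G.leafWeight (insert a C) b - G.leafWeight C b) := by
        rw [sum_congr rfl hdies]
        simp
    _ ≤ _ := sum_le_sum_of_subset_of_nonneg (filter_subset _ _)
        fun _ _ _ => sub_nonneg.2 (leafWeight_mono (subset_insert a C))

lemma tipPotential_le_tipPotential_insert {x : V} (ha : G.IsTip C a)
    (hx : G.outsideNbrs C a = {x}) : G.tipPotential C a ≤ G.tipPotential (insert a C) x := by
  have hdeg := degree_le_of_outsideNbrs_eq_singleton ha.1 hx
  have hgain := card_le_sum_leafWeight_insert_sub ha hx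
  have hw₂ : 2 ≤ G.leafWeight (insert a C) x := two_le_leafWeight
  have hw₃ : #(G.outsideNbrs (insert a C) x) = 0 → G.leafWeight (insert a C) x = 3 := by
    simp +contextual [leafWeight]
  unfold tipPotential
  rw [leafPotential_insert ha.1 ha.2.1, hx, sum_singleton, card_singleton]
  simp only [mem_branchVertices]
  split_ifs <;> omega

lemma isTip_insert {x : V} (ha : G.IsTip C a) (hx : G.outsideNbrs C a = {x})
    (hxlive : (G.outsideNbrs (insert a C) x).Nonempty) : G.IsTip (insert a C) x := by
  refine ⟨by simp [outerBoundary_insert ha.1, hx], hxlive, fun _ b hb hbx => ?_⟩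
  rw [outerBoundary_insert ha.1, hx, mem_union, mem_singleton, or_iff_left hbx] at hb
  exact (card_le_card (outsideNbrs_anti (subset_insert a C))).trans
    (ha.2.2 (by simp [hx]) b (mem_of_mem_erase hb) (ne_of_mem_erase hb))

lemma HasLeafySet.mono {b b' : ℤ} (h : G.HasLeafySet b') (hb : b ≤ b') : G.HasLeafySet b :=
  let ⟨C, hC, hC'⟩ := h
  ⟨C, hC, by omega⟩

lemma hasLeafySet_leafPotential_of_closedNbhd_eq_univ (hC : (G.induce (C : Set V)).Connected)
    (h : G.closedNbhd C = univ) : G.HasLeafySet (G.leafPotential C) := by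
  have hw : ∀ v ∈ G.outerBoundary C, G.leafWeight C v = 3 := fun v _ => by
    simp [leafWeight, outsideNbrs, h]
  have hD : #G.branchVertices ≤ #(C ∩ G.branchVertices) + #(G.outerBoundary C) := by
    calc #G.branchVertices ≤ #(C ∩ G.branchVertices ∪ G.outerBoundary C) := by
          refine card_le_card fun v hv => ?_
          have : v ∈ G.closedNbhd C := h ▸ mem_univ v
          rw [closedNbhd_eq_union_outerBoundary, mem_union] at this
          rcases this with hvC | hvB
          · exact mem_union_left _ (mem_inter.2 ⟨hvC, hv⟩)
          · exact mem_union_right _ hvB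
      _ ≤ _ := card_union_le _ _
  refine ⟨C, hC, ?_⟩
  rw [leafPotential, sum_congr rfl hw, sum_const, nsmul_eq_mul]
  omega

lemma leafPotential_sub_one_le_tipPotential : G.leafPotential C - 1 ≤ G.tipPotential C a := by
  unfold tipPotential
  split_ifs <;> omega

lemma hasLeafySet_leafPotential_sub_one (hG : G.Preconnected)
    (hC : (G.induce (C : Set V)).Connected)
    (htip : ∀ a, G.IsTip C a → G.HasLeafySet (G.tipPotential C a)) :
    G.HasLeafySet (G.leafPotential C - 1) := by
  by_cases hN : G.closedNbhd C = univ
  · exact (hasLeafySet_leafPotential_of_closedNbhd_eq_univ hC hN).mono (by omega)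
  by_cases h₂ : ∃ v ∈ G.outerBoundary C, 2 ≤ #(G.outsideNbrs C v)
  · obtain ⟨v, hv, hv₂⟩ := h₂
    exact (htip v ⟨hv, card_pos.1 (by omega), by omega⟩).mono
      leafPotential_sub_one_le_tipPotential
  · push Not at h₂
    obtain ⟨a, ha, hlive⟩ :=
      exists_outsideNbrs_nonempty hG (Set.nonempty_coe_sort.1 hC.nonempty) hN
    exact (htip a ⟨ha, hlive, fun _ b hb _ => by have := h₂ b hb; omega⟩).mono
      leafPotential_sub_one_le_tipPotential

theorem hasLeafySet_tipPotential (hG : G.Preconnected) (hC : (G.induce (C : Set V)).Connected)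
    (ha : G.IsTip C a) : G.HasLeafySet (G.tipPotential C a) := by
  induction hn : Fintype.card V - #C using Nat.strong_induction_on generalizing C a with
  | _ n ih =>
    have haB := ha.1
    have haC := (mem_outerBoundary.1 haB).1
    have hC' : (G.induce ↑(insert a C)).Connected := by
      obtain ⟨u, hu, hua⟩ := (mem_outerBoundary.1 haB).2
      rw [coe_insert]
      exact induce_insert_connected_of_adj hC hu hua
    have hlt : Fintype.card V - #(insert a C) < n := by
      have := card_le_univ (insert a C)
      rw [card_insert_of_notMem haC] at this ⊢
      omega
    have hnext : G.HasLeafySet (G.leafPotential (insert a C) - 1) :=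
      hasLeafySet_leafPotential_sub_one hG hC' fun b hb => ih _ hlt hC' hb rfl
    by_cases h₂ : 2 ≤ #(G.outsideNbrs C a)
    · exact hnext.mono
        (Int.le_sub_one_of_lt (tipPotential_lt_leafPotential_insert_of_two_le haB h₂))
    obtain ⟨x, hx⟩ := card_eq_one.1 (show #(G.outsideNbrs C a) = 1 by
      have := card_pos.2 ha.2.1
      omega)
    by_cases hxlive : (G.outsideNbrs (insert a C) x).Nonempty
    · exact (ih _ hlt hC' (isTip_insert ha hx hxlive) rfl).mono
        (tipPotential_le_tipPotential_insert ha hx)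
    · exact hnext.mono (Int.le_sub_one_of_lt (tipPotential_lt_leafPotential_insert_of_dead haB hx
        (not_nonempty_iff_eq_empty.1 hxlive)))

lemma leafPotential_singleton_nonneg (r : V) : 0 ≤ G.leafPotential {r} := by
  have hB : G.outerBoundary {r} = G.neighborFinset r := by
    ext v
    simp only [mem_outerBoundary, mem_singleton, exists_eq_left, mem_neighborFinset]
    exact ⟨fun h => h.2, fun h => ⟨(G.ne_of_adj h).symm, h⟩⟩
  have hsum : (G.degree r : ℤ) * 2 ≤ ∑ v ∈ G.outerBoundary {r}, G.leafWeight {r} v := by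
    simpa [hB] using card_nsmul_le_sum (G.outerBoundary {r}) (G.leafWeight {r}) 2
      fun x _ => two_le_leafWeight
  have hr : #({r} ∩ G.branchVertices) ≤ if 3 ≤ G.degree r then 1 else 0 := by
    split_ifs with h
    · exact (card_le_card inter_subset_left).trans (card_singleton r).le
    · simp [singleton_inter_of_notMem, mem_branchVertices, h]
  unfold leafPotential
  split_ifs at hr <;> omega

theorem Connected.exists_card_branchVertices_le (hG : G.Connected) :
    ∃ C : Finset V, (G.induce (C : Set V)).Connected ∧
      #G.branchVertices ≤ 4 * #(G.outerBoundary C) + 1 := by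
  obtain ⟨r⟩ := hG.nonempty
  have hr : (G.induce (({r} : Finset V) : Set V)).Connected := by
    rw [coe_singleton]
    exact induce_singleton_connected r
  obtain ⟨C, hC, hbound⟩ := hasLeafySet_leafPotential_sub_one hG.preconnected hr
    fun a ha => hasLeafySet_tipPotential hG.preconnected hr ha
  have := leafPotential_singleton_nonneg (G := G) r
  exact ⟨C, hC, by omega⟩

lemma ncard_neighborSet (v : V) : (G.neighborSet v).ncard = G.degree v := by
  rw [Set.ncard_eq_toFinset_card', ← neighborFinset_def, card_neighborFinset_eq_degree]

theorem Walk.IsCycle.mem_support_of_degree_le_two (hG : G.Preconnected) {u : V}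
    {p : G.Walk u u} (hp : p.IsCycle) (hdeg : ∀ v ∈ p.support, G.degree v ≤ 2) (w : V) :
    w ∈ p.support := by
  rw [← Walk.mem_verts_toSubgraph]
  refine (hG u w).mem_subgraphVerts (fun v hv y hy => ?_) p.start_mem_verts_toSubgraph
  rw [Walk.mem_verts_toSubgraph] at hv
  have : p.toSubgraph.neighborSet v = G.neighborSet v :=
    Set.eq_of_subset_of_ncard_le (p.toSubgraph.neighborSet_subset v)
      (by rw [hp.ncard_neighborSet_toSubgraph_eq_two hv, ncard_neighborSet]; exact hdeg v hv)
  exact (this ▸ hy : y ∈ p.toSubgraph.neighborSet v)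

theorem isLinearForest_induce_compl (hG : G.Preconnected) {X : Set V}
    (hD : ↑G.branchVertices ⊆ X) (hX : X.Nonempty) : (G.induce Xᶜ).IsLinearForest := by
  have hdeg (v : V) (hv : v ∉ X) : G.degree v ≤ 2 := by
    have : v ∉ G.branchVertices := fun h => hv (hD h)
    rw [mem_branchVertices] at this
    omega
  refine ⟨fun v c hc => ?_, fun v => ?_⟩
  · let c' := c.map (Embedding.induce Xᶜ).toHom
    have hc' : c'.IsCycle := hc.map Subtype.val_injective
    have hout : ∀ w ∈ c'.support, w ∉ X := by
      simp only [c', Walk.support_map, List.mem_map]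
      rintro _ ⟨w, -, rfl⟩
      exact w.2
    obtain ⟨x, hx⟩ := hX
    exact hout x (hc'.mem_support_of_degree_le_two hG (fun w hw => hdeg w (hout w hw)) x) hx
  · calc ((G.induce Xᶜ).neighborSet v).ncard ≤ (G.neighborSet v).ncard :=
          Set.ncard_le_ncard_of_injOn Subtype.val (fun _ h => h) Subtype.val_injective.injOn
      _ ≤ 2 := (ncard_neighborSet (G := G) v).trans_le (hdeg v v.2)

end

end SimpleGraph

/-- a simple connected graph with no `K_{1,k}` minor has a linearizing
set of at most `4k` vertices. -/
theorem linearizingSet_of_no_star_minor {V : Type*} [Fintype V] (G : SimpleGraph V) (k : ℕ)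
    (hc : G.Connected) (h : ¬ G.HasStarMinor k) :
    ∃ X : Set V, X.ncard ≤ 4 * k ∧ (G.induce Xᶜ).IsLinearForest := by
  obtain ⟨r⟩ := hc.nonempty
  obtain ⟨C, hC, hD⟩ := hc.exists_card_branchVertices_le
  have hk : #(G.outerBoundary C) < k :=
    lt_of_not_ge fun hk => h (SimpleGraph.hasStarMinor_of_le_card_outerBoundary hC hk)
  refine ⟨↑(insert r G.branchVertices), ?_, ?_⟩
  · rw [Set.ncard_coe_finset]
    have := card_insert_le r G.branchVertices
    omega
  · exact SimpleGraph.isLinearForest_induce_compl hc.preconnected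
      (by simp [Set.subset_insert]) ⟨r, by simp⟩
end

section
/- For all integers d, a, w, p there exists an integer n such that: if every d-edge-connected subset of V(G) is (a,w,p)-linear, then G does not contain K_n as a strong immersion. In fact n = max{2w+2, (2p+1)a+1, d+1} suffices. -/
/-!
Two branch vertices of a strong immersion of `K_n` on opposite sides of an edge cut are joined,
through each of the other `n - 2` branch vertices and directly, by edge-disjoint paths crossing the
cut; so the branch set `W` is `(n-1)`-edge-connected and hence `(a,w,p)`-linear, with apex set `A`
and ordering `x_1, …, x_t` of `W ∖ A`. Since the immersion is strong, the path from `x_1` to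
`x_k`, `k ≥ 3`, avoids `A` and `x_2`, so it crosses the `x_2`-cut; hence `t - 2 < w` and
`n ≤ t + a ≤ w + 1 + a`. This contradicts `n ≥ 2w + 2` and `n ≥ 3a + 1` once `p ≥ 1`. If `p = 0`,
then `A ≠ ∅`, and the path from a vertex of `A` to `x_1` leaves it through a neighbour in `G - A`,
so its neighbourhood is not `0`-bounded.
-/

open scoped Classical

namespace Multigraph

variable {V E V' E' : Type*} {G : Multigraph V E}

def edgesBetween (G : Multigraph V E) (L R : Set V) : Set E :=
  {e | (G.src e ∈ L ∧ G.tgt e ∈ R) ∨ (G.src e ∈ R ∧ G.tgt e ∈ L)}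

theorem EdgeConnSet.mono {j k : ℕ} {W : Set V} (h : G.EdgeConnSet k W) (hjk : j ≤ k) :
    G.EdgeConnSet j W :=
  fun S hS => h S (hS.trans_le hjk)

namespace Walk

theorem start_mem_support : ∀ {u v : V} (p : G.Walk u v), u ∈ p.support
  | _, _, .nil _ => List.mem_singleton_self _
  | _, _, .cons _ _ _ _ => List.mem_cons_self
  | _, _, .cons' _ _ _ _ => List.mem_cons_self

theorem end_mem_support : ∀ {u v : V} (p : G.Walk u v), v ∈ p.support
  | _, _, .nil _ => List.mem_singleton_self _
  | _, _, .cons _ _ _ p => List.mem_cons_of_mem _ p.end_mem_support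
  | _, _, .cons' _ _ _ p => List.mem_cons_of_mem _ p.end_mem_support

theorem exists_mem_edges_edgesBetween {L R : Set V} {u v : V} (p : G.Walk u v)
    (hp : ∀ z ∈ p.support, z ∈ L ∪ R) (huv : ¬ (u ∈ L ↔ v ∈ L)) :
    ∃ e ∈ p.edges, e ∈ G.edgesBetween L R := by
  induction p with
  | nil => exact absurd Iff.rfl huv
  | @cons u v₁ w e hs ht q ih | @cons' u v₁ w e hs ht q ih =>
    have hu := hp u List.mem_cons_self
    have hv₁ := hp v₁ (List.mem_cons_of_mem _ q.start_mem_support)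
    by_cases hq : v₁ ∈ L ↔ w ∈ L
    · refine ⟨e, List.mem_cons_self, ?_⟩
      subst hs ht
      simp only [edgesBetween, Set.mem_ofPred_eq, Set.mem_union] at hu hv₁ ⊢
      tauto
    · obtain ⟨f, hf, hfLR⟩ := ih (fun z hz => hp z (List.mem_cons_of_mem _ hz)) hq
      exact ⟨f, List.mem_cons_of_mem _ hf, hfLR⟩

theorem exists_mem_support_mem_nbhd {u v x y : V} (p : G.Walk u v) (hx : x ∈ p.support)
    (hy : y ∈ p.support) (hyx : y ≠ x) : ∃ z ∈ p.support, z ∈ G.nbhd x := by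
  induction p generalizing y with
  | nil => simp_all [support]
  | @cons u v₁ w e hs ht q ih | @cons' u v₁ w e hs ht q ih =>
    have hadj : u ≠ v₁ → u ∈ G.nbhd v₁ ∧ v₁ ∈ G.nbhd u := fun h =>
      ⟨⟨h, e, by tauto⟩, ⟨Ne.symm h, e, by tauto⟩⟩
    have hv₁ := q.start_mem_support
    have hq : (∃ z ∈ q.support, z ∈ G.nbhd x) → ∃ z ∈ u :: q.support, z ∈ G.nbhd x :=
      fun ⟨z, hz, hzx⟩ => ⟨z, List.mem_cons_of_mem _ hz, hzx⟩
    simp only [support, List.mem_cons] at hx hy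
    change ∃ z ∈ u :: q.support, z ∈ G.nbhd x
    rcases eq_or_ne u v₁ with rfl | huv
    · exact hq (ih (hx.elim (· ▸ hv₁) id) (hy.elim (· ▸ hv₁) id) hyx)
    · rcases hx with rfl | hx
      · exact ⟨v₁, List.mem_cons_of_mem _ hv₁, (hadj huv).2⟩
      · rcases eq_or_ne v₁ x with rfl | hv₁x
        · exact ⟨u, List.mem_cons_self, (hadj huv).1⟩
        · exact hq (ih hx hv₁ hv₁x)

end Walk

def completeMGEdge {n : ℕ} {α β : Fin n} (h : α ≠ β) : {q : Fin n × Fin n // q.1 < q.2} :=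
  if hlt : α < β then ⟨(α, β), hlt⟩ else ⟨(β, α), h.lt_or_gt.resolve_left hlt⟩

theorem ends_completeMGEdge {n : ℕ} {α β : Fin n} (h : α ≠ β) :
    s((completeMG n).src (completeMGEdge h), (completeMG n).tgt (completeMGEdge h)) = s(α, β) := by
  unfold completeMGEdge
  split_ifs <;> simp [completeMG, Sym2.eq_swap]

theorem StrongImm.card_le_ncard_of_forall_exists_mem_edges [Finite E] {H : Multigraph V' E'}
    (imm : StrongImm H G) {ι : Type*} {f : ι → E'} (hf : f.Injective) {C : Set E}
    (hC : ∀ i, ∃ e ∈ (imm.path (f i)).edges, e ∈ C) : Nat.card ι ≤ C.ncard := by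
  choose g hg hgC using hC
  have hg_inj : g.Injective := fun i j hij => by_contra fun hne =>
    imm.edisj _ _ (hf.ne hne) _ (hg i) (hij ▸ hg j)
  rw [← Set.ncard_range_of_injective hg_inj]
  exact Set.ncard_le_ncard (Set.range_subset_iff.2 hgC)

section CompleteGraph

variable {n : ℕ} (imm : StrongImm (completeMG n) G) {α β : Fin n}

theorem StrongImm.vmap_mem_support (h : α ≠ β) :
    imm.vmap α ∈ (imm.path (completeMGEdge h)).support ∧
      imm.vmap β ∈ (imm.path (completeMGEdge h)).support := by
  have hs := (imm.path (completeMGEdge h)).start_mem_support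
  have ht := (imm.path (completeMGEdge h)).end_mem_support
  generalize (imm.path (completeMGEdge h)).support = l at hs ht ⊢
  rcases Sym2.eq_iff.1 (ends_completeMGEdge h) with ⟨h1, h2⟩ | ⟨h1, h2⟩ <;>
    rw [h1] at hs <;> rw [h2] at ht <;> exact ⟨‹_›, ‹_›⟩

theorem StrongImm.eq_or_eq_of_vmap_mem_support {γ : Fin n} (h : α ≠ β)
    (hγ : imm.vmap γ ∈ (imm.path (completeMGEdge h)).support) : γ = α ∨ γ = β := by
  by_contra! hne
  rcases Sym2.eq_iff.1 (ends_completeMGEdge h) with ⟨h1, h2⟩ | ⟨h1, h2⟩ <;>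
    exact imm.avoid _ γ (by rw [h1]; tauto) (by rw [h2]; tauto) hγ

theorem StrongImm.exists_mem_edges_edgesBetween {L R : Set V} (h : α ≠ β)
    (hp : ∀ z ∈ (imm.path (completeMGEdge h)).support, z ∈ L ∪ R)
    (hαβ : ¬ (imm.vmap α ∈ L ↔ imm.vmap β ∈ L)) :
    ∃ e ∈ (imm.path (completeMGEdge h)).edges, e ∈ G.edgesBetween L R := by
  refine Walk.exists_mem_edges_edgesBetween _ hp ?_
  rcases Sym2.eq_iff.1 (ends_completeMGEdge h) with ⟨h1, h2⟩ | ⟨h1, h2⟩ <;> rw [h1, h2] <;> tauto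

theorem StrongImm.edgeConnSet_range [Finite E] : G.EdgeConnSet (n - 1) (Set.range imm.vmap) := by
  rintro S hS _ ⟨α, rfl⟩ _ ⟨β, rfl⟩
  by_contra hαβ
  have hne : α ≠ β := by rintro rfl; exact hαβ Iff.rfl
  -- each `γ ≠ β` is joined across the cut to `β` or to `α`, whichever lies on the other side
  have hcross : ∀ γ : {γ // γ ≠ β}, ∃ k, (s((completeMG n).src k, (completeMG n).tgt k) =
      s(γ.1, β) ∨ s((completeMG n).src k, (completeMG n).tgt k) = s(α, γ.1)) ∧
      ∃ e ∈ (imm.path k).edges, e ∈ G.cutEdges S := by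
    rintro ⟨γ, hγβ⟩
    by_cases hγ : imm.vmap γ ∈ S ↔ imm.vmap α ∈ S
    · exact ⟨_, Or.inl (ends_completeMGEdge hγβ),
        imm.exists_mem_edges_edgesBetween (R := Sᶜ) hγβ (fun z _ => em (z ∈ S)) (by tauto)⟩
    · have hαγ : α ≠ γ := by rintro rfl; exact hγ Iff.rfl
      exact ⟨_, Or.inr (ends_completeMGEdge hαγ),
        imm.exists_mem_edges_edgesBetween (R := Sᶜ) hαγ (fun z _ => em (z ∈ S)) (by tauto)⟩
  choose k hk hkS using hcross
  have hk_inj : k.Injective := by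
    rintro ⟨γ, hγ⟩ ⟨γ', hγ'⟩ hkk
    have h1 := hk ⟨γ, hγ⟩
    have h2 := hk ⟨γ', hγ'⟩
    rw [hkk] at h1
    simp only [Subtype.mk.injEq]
    rcases h1 with h1 | h1 <;> rcases h2 with h2 | h2 <;> rw [h1, Sym2.eq_iff] at h2 <;> grind
  have hcard := imm.card_le_ncard_of_forall_exists_mem_edges hk_inj hkS
  rw [Nat.card_eq_fintype_card, Fintype.card_subtype_compl, Fintype.card_fin,
    Fintype.card_subtype_eq] at hcard
  omega

end CompleteGraph

namespace PathLikeDecomp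

variable {S X : Set V} (P : PathLikeDecomp G S X)

theorem ord_mem (j : Fin P.t) : P.ord j ∈ X := P.ord_range.subset (Set.mem_range_self j)

theorem ncard_eq_t : X.ncard = P.t := by
  have h := Set.ncard_range_of_injective P.ord_inj
  rwa [P.ord_range, Nat.card_fin] at h

theorem mem_sdiff_of_mem_bag {z : V} {j : Fin (P.t + 1)} (hz : z ∈ P.bag j) : z ∈ S \ X :=
  P.bag_union ▸ Set.mem_iUnion_of_mem j hz

theorem exists_mem_bag {z : V} (hz : z ∈ S \ X) : ∃ j, z ∈ P.bag j :=
  Set.mem_iUnion.1 (P.bag_union ▸ hz)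

theorem ord_mem_leftSet {i j : Fin P.t} (hji : j < i) : P.ord j ∈ P.leftSet i :=
  Or.inl ⟨j, hji, rfl⟩

theorem ord_notMem_leftSet {i k : Fin P.t} (hik : i ≤ k) : P.ord k ∉ P.leftSet i := by
  rintro (⟨j, hji, hkj⟩ | hbag)
  · exact (hik.trans_lt (P.ord_inj hkj ▸ hji)).false
  · obtain ⟨j, -, hj⟩ := Set.mem_iUnion₂.1 hbag
    exact (P.mem_sdiff_of_mem_bag hj).2 (P.ord_mem k)

theorem mem_leftSet_or_mem_rightSet {z : V} {i : Fin P.t} (hz : z ∈ S) (hzi : z ≠ P.ord i) :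
    z ∈ P.leftSet i ∪ P.rightSet i := by
  by_cases hzX : z ∈ X
  · obtain ⟨j, rfl⟩ := P.ord_range ▸ hzX
    rcases lt_or_gt_of_ne (ne_of_apply_ne P.ord hzi) with hji | hij
    · exact Or.inl (Or.inl ⟨j, hji, rfl⟩)
    · exact Or.inr (Or.inl ⟨j, hij, rfl⟩)
  · obtain ⟨j, hj⟩ := P.exists_mem_bag ⟨hz, hzX⟩
    rcases le_or_gt (j : ℕ) i with hji | hij
    · exact Or.inl (Or.inr (Set.mem_iUnion₂.2 ⟨j, hji, hj⟩))
    · exact Or.inr (Or.inr (Set.mem_iUnion₂.2 ⟨j, hij, hj⟩))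

theorem not_bounded_zero_of_mem [Finite V] {Z : Set V} {z : V} (hzS : z ∈ S) (hzZ : z ∈ Z) :
    ¬ P.Bounded 0 Z := by
  intro hP
  unfold Bounded at hP
  by_cases hzX : z ∈ X
  · have hpos := (Set.ncard_pos (s := X ∩ Z)).2 ⟨z, hzX, hzZ⟩
    omega
  · obtain ⟨j, hj⟩ := P.exists_mem_bag ⟨hzS, hzX⟩
    have hpos := (Set.ncard_pos (s := {j | (P.bag j ∩ Z).Nonempty})).2 ⟨j, z, hj, hzZ⟩
    omega

end PathLikeDecomp

section LinearBranchSet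

variable {n : ℕ} (imm : StrongImm (completeMG n) G) {A : Set V}

theorem StrongImm.t_add_ncard_eq (hA : A ⊆ Set.range imm.vmap)
    (P : PathLikeDecomp G {v | v ∉ A} (Set.range imm.vmap \ A)) : P.t + A.ncard = n := by
  rw [← P.ncard_eq_t, Set.ncard_sdiff_add_ncard_of_subset hA,
    Set.ncard_range_of_injective imm.vinj, Nat.card_fin]

theorem StrongImm.le_ncard_cutAt [Finite E] (hA : A ⊆ Set.range imm.vmap)
    (P : PathLikeDecomp G {v | v ∉ A} (Set.range imm.vmap \ A)) {i j : Fin P.t} (hji : j < i) :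
    P.t - 1 - i ≤ (P.cutAt i).ncard := by
  choose β hβ using fun k => (P.ord_mem k).1
  have hβ_inj : β.Injective := fun k l hkl => P.ord_inj (by rw [← hβ, ← hβ, hkl])
  have hne : ∀ k : Finset.Ioi i, β j ≠ β k :=
    fun k => hβ_inj.ne (hji.trans (Finset.mem_Ioi.1 k.2)).ne
  have hcross : ∀ k : Finset.Ioi i,
      ∃ e ∈ (imm.path (completeMGEdge (hne k))).edges, e ∈ P.cutAt i := by
    intro k
    have hk : i < k := Finset.mem_Ioi.1 k.2
    refine imm.exists_mem_edges_edgesBetween (hne k)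
      (fun z hz => P.mem_leftSet_or_mem_rightSet ?_ ?_) ?_
    · intro hzA
      obtain ⟨γ, rfl⟩ := hA hzA
      rcases imm.eq_or_eq_of_vmap_mem_support _ hz with rfl | rfl
      · exact (P.ord_mem j).2 (hβ j ▸ hzA)
      · exact (P.ord_mem k).2 (hβ k ▸ hzA)
    · rintro rfl
      rw [← hβ] at hz
      rcases imm.eq_or_eq_of_vmap_mem_support _ hz with h | h
      · exact hji.ne' (hβ_inj h)
      · exact hk.ne (hβ_inj h)
    · rw [hβ, hβ]
      exact fun h => P.ord_notMem_leftSet hk.le (h.1 (P.ord_mem_leftSet hji))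
  have hinj : (fun k : Finset.Ioi i => completeMGEdge (hne k)).Injective := by
    intro k l (hkl : completeMGEdge (hne k) = completeMGEdge (hne l))
    have h := ends_completeMGEdge (hne k)
    rw [hkl, ends_completeMGEdge, Sym2.congr_right] at h
    exact Subtype.ext (hβ_inj h.symm)
  calc P.t - 1 - i = Nat.card (Finset.Ioi i) := by
        rw [Nat.card_eq_fintype_card, Fintype.card_coe, Fin.card_Ioi]
    _ ≤ (P.cutAt i).ncard := imm.card_le_ncard_of_forall_exists_mem_edges hinj hcross

theorem StrongImm.t_le_of_widthLt [Finite E] (hA : A ⊆ Set.range imm.vmap)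
    (P : PathLikeDecomp G {v | v ∉ A} (Set.range imm.vmap \ A)) {w : ℕ} (hw : P.WidthLt w) :
    P.t ≤ w + 1 := by
  by_contra! ht
  have hcut := imm.le_ncard_cutAt hA P (i := ⟨1, by omega⟩) (j := ⟨0, by omega⟩)
    (Fin.mk_lt_mk.2 Nat.zero_lt_one)
  have hwidth := hw ⟨1, by omega⟩
  simp only at hcut
  omega

theorem StrongImm.not_bounded_zero_nbhd [Finite V] (hA : A ⊆ Set.range imm.vmap)
    (P : PathLikeDecomp G {v | v ∉ A} (Set.range imm.vmap \ A)) {u : V} (hu : u ∈ A)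
    (hX : (Set.range imm.vmap \ A).Nonempty) : ¬ P.Bounded 0 (G.nbhd u) := by
  obtain ⟨γ, rfl⟩ := hA hu
  obtain ⟨_, ⟨β, rfl⟩, hβ⟩ := hX
  have hγβ : γ ≠ β := by rintro rfl; exact hβ hu
  obtain ⟨hγ, hβ'⟩ := imm.vmap_mem_support hγβ
  obtain ⟨z, hz, hzu⟩ := Walk.exists_mem_support_mem_nbhd _ hγ hβ' (imm.vinj.ne hγβ.symm)
  refine P.not_bounded_zero_of_mem (fun hzA => ?_) hzu
  obtain ⟨δ, rfl⟩ := hA hzA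
  rcases imm.eq_or_eq_of_vmap_mem_support hγβ hz with rfl | rfl
  · exact hzu.1 rfl
  · exact hβ hzA

end LinearBranchSet

end Multigraph

/-- with `n = max {2w+2, (2p+1)a+1, d+1}`, if every `d`-edge-connected subset
of `V(G)` is `(a,w,p)`-linear, then `G` contains no strong immersion of `K_n`. -/
theorem no_clique_immersion_of_linear {V E : Type*} [Fintype V] [Fintype E]
    (d a w p : ℕ) (G : Multigraph V E)
    (h : ∀ W : Set V, G.EdgeConnSet d W → Multigraph.Linear G W a w p) :
    ¬ Multigraph.StrongImmersion
        (Multigraph.completeMG (max (2 * w + 2) (max ((2 * p + 1) * a + 1) (d + 1)))) G := by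
  rintro ⟨imm⟩
  obtain ⟨A, hAW, hAa, P, hwidth, hbounded⟩ :=
    h _ (imm.edgeConnSet_range.mono (by omega))
  have ht := imm.t_le_of_widthLt hAW P hwidth
  have hcard := imm.t_add_ncard_eq hAW P
  rcases Nat.eq_zero_or_pos p with rfl | hp
  · obtain ⟨u, hu⟩ := Set.nonempty_of_ncard_ne_zero (s := A) (by omega)
    have hX := Set.nonempty_of_ncard_ne_zero (s := Set.range imm.vmap \ A)
      (by rw [P.ncard_eq_t]; omega)
    exact imm.not_bounded_zero_nbhd hAW P hu hX (hbounded u hu)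
  · have h3a : 3 * a ≤ (2 * p + 1) * a := Nat.mul_le_mul_right a (by omega)
    omega
end
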